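/- arXiv:1108.0451 — 13 statements merged into one kernel-verified Lean document; each statement's English description precedes it below -/
import Mathlib

section
/- If a finite metric space (X,d) has p-negative type for some p > 0, i.e. for all choices of points x_1,...,x_k in X and reals α_1,...,α_k with α_1+...+α_k = 0 we have Σ_{i,j} d(x_i,x_j)^p α_i α_j ≤ 0, then for every q with 0 ≤ q < p, (X,d) has strict q-negative type: the inequality Σ_{i,j} d(x_i,x_j)^q α_i α_j ≤ 0 holds with equality only when all α_i = 0. -/
/-!
Put `θ = q / p` and `tᵢⱼ = d(xᵢ, xⱼ) ^ p`. For `0 < θ < 1` and `t ≥ 0`,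
`∫₀^∞ (1 - e^{-l t}) l^{-θ-1} dl = c_θ t^θ` with `c_θ > 0`, so, because `∑ αᵢ = 0`,
`c_θ ∑ αᵢ αⱼ tᵢⱼ^θ = -∫₀^∞ (∑ αᵢ αⱼ e^{-l tᵢⱼ}) l^{-θ-1} dl`.
By Schoenberg's theorem, `p`-negative type makes every matrix `(e^{-l tᵢⱼ})` positive
semidefinite (Schur product theorem and the exponential series), so the integrand is nonnegative;
as `l → ∞` it tends to `∑ αᵢ²`, hence the integral is positive unless `α = 0`.
For `q = 0` the form is `∑_{i ≠ j} αᵢ αⱼ = -∑ αᵢ²`.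
-/

open Real Filter MeasureTheory Set Topology

section Integrals

variable {θ : ℝ}

lemma setIntegral_Ioi_pos_of_eventually_pos {f : ℝ → ℝ} {a : ℝ} (hf : IntegrableOn f (Ioi a))
    (hf0 : ∀ l ∈ Ioi a, 0 ≤ f l) (hpos : ∀ᶠ l in atTop, 0 < f l) : 0 < ∫ l in Ioi a, f l := by
  rw [setIntegral_pos_iff_support_of_nonneg_ae (ae_restrict_of_forall_mem measurableSet_Ioi hf0) hf]
  obtain ⟨b, hb⟩ := eventually_atTop.1 hpos
  calc 0 < volume (Ioi (max a b)) := by simp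
    _ ≤ volume (Function.support f ∩ Ioi a) := measure_mono fun l hl =>
      ⟨(hb l (le_max_right a b |>.trans hl.le)).ne', (le_max_left a b).trans_lt hl⟩

lemma one_sub_exp_neg_mul_mul_rpow_nonneg {t l : ℝ} (ht : 0 ≤ t) (hl : 0 < l) :
    0 ≤ (1 - rexp (-(l * t))) * l ^ (-θ - 1) :=
  mul_nonneg (sub_nonneg.2 (exp_le_one_iff.2 (by nlinarith))) (rpow_nonneg hl.le _)

lemma integrableOn_Ioi_one_sub_exp_neg_mul_mul_rpow (hθ0 : 0 < θ) (hθ1 : θ < 1) {t : ℝ}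
    (ht : 0 ≤ t) : IntegrableOn (fun l => (1 - rexp (-(l * t))) * l ^ (-θ - 1)) (Ioi 0) := by
  have hmeas : ∀ s ⊆ Ioi (0 : ℝ), MeasurableSet s →
      AEStronglyMeasurable (fun l => (1 - rexp (-(l * t))) * l ^ (-θ - 1)) (volume.restrict s) :=
    fun s hs hsm => ContinuousOn.aestronglyMeasurable (by
      refine ContinuousOn.mul (by fun_prop) (continuousOn_id.rpow_const fun l hl => ?_)
      exact Or.inl (hs hl).ne') hsm
  rw [← Ioc_union_Ioi_eq_Ioi zero_le_one]
  refine IntegrableOn.union ?_ ?_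
  · have hmaj : IntegrableOn (fun l : ℝ => t * l ^ (-θ)) (Ioc 0 1) := by
      rw [← intervalIntegrable_iff_integrableOn_Ioc_of_le zero_le_one]
      exact (intervalIntegral.intervalIntegrable_rpow' (r := -θ) (by linarith)).const_mul t
    refine hmaj.mono' (hmeas _ Ioc_subset_Ioi_self measurableSet_Ioc)
      (ae_restrict_of_forall_mem measurableSet_Ioc fun l hl => ?_)
    rw [norm_of_nonneg (one_sub_exp_neg_mul_mul_rpow_nonneg ht hl.1), rpow_sub_one hl.1.ne']
    calc (1 - rexp (-(l * t))) * (l ^ (-θ) / l) ≤ l * t * (l ^ (-θ) / l) := by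
          gcongr
          · exact div_nonneg (rpow_nonneg hl.1.le _) hl.1.le
          · linarith [add_one_le_exp (-(l * t))]
      _ = t * l ^ (-θ) := by field_simp [hl.1.ne']
  · refine (integrableOn_Ioi_rpow_of_lt (a := -θ - 1) (by linarith) zero_lt_one).mono'
      (hmeas _ (Ioi_subset_Ioi zero_le_one) measurableSet_Ioi)
      (ae_restrict_of_forall_mem measurableSet_Ioi fun l (hl : 1 < l) => ?_)
    rw [norm_of_nonneg (one_sub_exp_neg_mul_mul_rpow_nonneg ht (zero_lt_one.trans hl))]
    exact mul_le_of_le_one_left (rpow_nonneg (zero_le_one.trans hl.le) _)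
      (by linarith [exp_pos (-(l * t))])

lemma integral_Ioi_one_sub_exp_neg_mul_mul_rpow (hθ0 : 0 < θ) {t : ℝ} (ht : 0 ≤ t) :
    ∫ l in Ioi 0, (1 - rexp (-(l * t))) * l ^ (-θ - 1) =
      t ^ θ * ∫ l in Ioi 0, (1 - rexp (-l)) * l ^ (-θ - 1) := by
  rcases ht.eq_or_lt with rfl | ht
  · simp [zero_rpow hθ0.ne']
  have hscale : ∀ l ∈ Ioi (0 : ℝ), (1 - rexp (-(l * t))) * l ^ (-θ - 1) =
      t ^ (θ + 1) * ((1 - rexp (-(l * t))) * (l * t) ^ (-θ - 1)) := fun l hl => by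
    rw [mul_rpow (le_of_lt hl) ht.le, show ∀ a b c d : ℝ, a * (b * (c * d)) = (a * d) * (b * c) by
      intros; ring, ← rpow_add ht]
    simp
  rw [setIntegral_congr_fun measurableSet_Ioi hscale, integral_const_mul,
    integral_comp_mul_right_Ioi (fun u => (1 - rexp (-u)) * u ^ (-θ - 1)) 0 ht, zero_mul,
    smul_eq_mul, ← mul_assoc, rpow_add ht, rpow_one, mul_inv_cancel_right₀ ht.ne']

lemma integral_Ioi_one_sub_exp_neg_mul_rpow_pos (hθ0 : 0 < θ) (hθ1 : θ < 1) :
    0 < ∫ l in Ioi 0, (1 - rexp (-l)) * l ^ (-θ - 1) := by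
  refine setIntegral_Ioi_pos_of_eventually_pos
    (by simpa using integrableOn_Ioi_one_sub_exp_neg_mul_mul_rpow hθ0 hθ1 zero_le_one)
    (fun l hl => by simpa using one_sub_exp_neg_mul_mul_rpow_nonneg (θ := θ) zero_le_one hl) ?_
  filter_upwards [eventually_gt_atTop 0] with l hl
  exact mul_pos (sub_pos.2 (exp_lt_one_iff.2 (neg_lt_zero.2 hl))) (rpow_pos_of_pos hl _)

end Integrals

namespace Matrix

variable {ι : Type*} [Fintype ι]

lemma dotProduct_mulVec_eq_sum (M : Matrix ι ι ℝ) (x : ι → ℝ) :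
    x ⬝ᵥ M *ᵥ x = ∑ i, ∑ j, M i j * x i * x j := by
  simp only [dotProduct, mulVec, Finset.mul_sum]
  exact Finset.sum_congr rfl fun i _ => Finset.sum_congr rfl fun j _ => by ring

lemma PosSemidef.sum_mul_mul_nonneg {M : Matrix ι ι ℝ} (hM : M.PosSemidef) (x : ι → ℝ) :
    0 ≤ ∑ i, ∑ j, M i j * x i * x j := by
  simpa [dotProduct_mulVec_eq_sum] using hM.dotProduct_mulVec_nonneg x

lemma posSemidef_of_sum_mul_mul_nonneg {M : Matrix ι ι ℝ} (hM : M.IsSymm)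
    (h : ∀ x : ι → ℝ, 0 ≤ ∑ i, ∑ j, M i j * x i * x j) : M.PosSemidef :=
  .of_dotProduct_mulVec_nonneg (isHermitian_iff_isSymm.2 hM) fun x => by
    simpa [dotProduct_mulVec_eq_sum] using h x

lemma PosSemidef.map_pow {A : Matrix ι ι ℝ} (hA : A.PosSemidef) (n : ℕ) :
    (A.map (· ^ n)).PosSemidef := by
  induction n with
  | zero =>
    convert posSemidef_vecMulVec_self_star (1 : ι → ℝ) using 1
    ext; simp [vecMulVec]
  | succ n ih =>
    have : A.map (· ^ (n + 1)) = A.map (· ^ n) ⊙ A := by ext; simp [pow_succ]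
    exact this ▸ ih.hadamard hA

lemma PosSemidef.map_exp {A : Matrix ι ι ℝ} (hA : A.PosSemidef) : (A.map rexp).PosSemidef := by
  refine posSemidef_of_sum_mul_mul_nonneg ((isHermitian_iff_isSymm.1 hA.isHermitian).map _)
    fun x => ?_
  have hsum : HasSum (fun n : ℕ => (∑ i, ∑ j, A i j ^ n * x i * x j) / n.factorial)
      (∑ i, ∑ j, rexp (A i j) * x i * x j) := by
    simp only [Finset.sum_div]
    refine hasSum_sum fun i _ => hasSum_sum fun j _ => ?_
    simpa [Real.exp_eq_exp_ℝ, div_mul_eq_mul_div, mul_assoc] using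
      ((NormedSpace.expSeries_div_hasSum_exp (A i j)).mul_right (x i * x j))
  exact hsum.nonneg fun n => div_nonneg ((hA.map_pow n).sum_mul_mul_nonneg x) (Nat.cast_nonneg _)

def CondNegSemidef (A : Matrix ι ι ℝ) : Prop :=
  ∀ β : ι → ℝ, ∑ i, β i = 0 → ∑ i, ∑ j, A i j * β i * β j ≤ 0

lemma CondNegSemidef.smul {A : Matrix ι ι ℝ} (hA : A.CondNegSemidef) {c : ℝ} (hc : 0 ≤ c) :
    (c • A).CondNegSemidef := fun β hβ => by
  simpa [mul_assoc, ← Finset.mul_sum] using mul_nonpos_of_nonneg_of_nonpos hc (hA β hβ)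

lemma CondNegSemidef.posSemidef_col_add_col_sub [DecidableEq ι] {A : Matrix ι ι ℝ}
    (hA : A.CondNegSemidef) (hsymm : A.IsSymm) {i₀ : ι} (h₀ : A i₀ i₀ = 0) :
    (of fun i j => A i i₀ + A j i₀ - A i j).PosSemidef := by
  refine posSemidef_of_sum_mul_mul_nonneg (IsSymm.ext_iff.2 fun i j => ?_) fun δ => ?_
  · simp [hsymm.apply i j, add_comm]
  -- the form at `δ` is minus the form of `A` at the zero-sum vector `δ - (∑ δ) • e_{i₀}`
  set s := ∑ i, δ i
  set c := ∑ i, A i i₀ * δ i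
  have hβ : ∑ i, (δ i - if i = i₀ then s else 0) = 0 := by simp [Finset.sum_sub_distrib, s]
  have hQβ := hA _ hβ
  have h₁ : ∑ i, ∑ j, A i i₀ * δ i * δ j = c * s := by rw [Finset.sum_mul_sum]
  have h₂ : ∑ i, ∑ j, A j i₀ * δ i * δ j = c * s := by
    rw [mul_comm, Finset.sum_mul_sum]
    exact Finset.sum_congr rfl fun _ _ => Finset.sum_congr rfl fun _ _ => by ring
  have h₃ : ∑ j, A i₀ j * s * δ j = c * s := by
    rw [Finset.sum_mul]
    exact Finset.sum_congr rfl fun j _ => by rw [hsymm.apply j i₀]; ring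
  have h₄ : ∑ i, A i i₀ * δ i * s = c * s := by rw [Finset.sum_mul]
  simp only [mul_sub, sub_mul, Finset.sum_sub_distrib, ite_mul, mul_ite, zero_mul, mul_zero,
    Finset.sum_ite_irrel, Finset.sum_const_zero, Finset.sum_ite_eq', Finset.mem_univ, if_true,
    of_apply, add_mul, Finset.sum_add_distrib, h₀] at hQβ ⊢
  linarith

theorem CondNegSemidef.posSemidef_map_exp_neg {A : Matrix ι ι ℝ} (hA : A.CondNegSemidef)
    (hsymm : A.IsSymm) (hdiag : ∀ i, A i i = 0) : (A.map fun a => rexp (-a)).PosSemidef := by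
  classical
  refine posSemidef_of_sum_mul_mul_nonneg (hsymm.map _) fun x => ?_
  rcases isEmpty_or_nonempty ι with hι | ⟨⟨i₀⟩⟩
  · simp
  -- `exp (-A i j)` is `exp (A i i₀ + A j i₀ - A i j)` conjugated by the diagonal `exp (-A i i₀)`
  refine ((hA.posSemidef_col_add_col_sub hsymm (hdiag i₀)).map_exp.sum_mul_mul_nonneg
    fun i => rexp (-A i i₀) * x i).trans_eq (Finset.sum_congr rfl fun i _ =>
      Finset.sum_congr rfl fun j _ => ?_)
  simp only [map_apply, of_apply, sub_eq_add_neg, Real.exp_add, Real.exp_neg]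
  field_simp

section IntegralRepresentation

variable {A : Matrix ι ι ℝ} {α : ι → ℝ} {θ : ℝ}

lemma sum_one_sub_exp_neg_mul_rpow_mul_mul (hα : ∑ i, α i = 0) (l : ℝ) :
    ∑ i, ∑ j, (1 - rexp (-(l * A i j))) * l ^ (-θ - 1) * α i * α j =
      -((∑ i, ∑ j, rexp (-(l * A i j)) * α i * α j) * l ^ (-θ - 1)) := by
  calc _ = ∑ i, ∑ j,
        (l ^ (-θ - 1) * (α i * α j) - rexp (-(l * A i j)) * α i * α j * l ^ (-θ - 1)) :=
        Finset.sum_congr rfl fun i _ => Finset.sum_congr rfl fun j _ => by ring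
    _ = _ := by
        simp only [Finset.sum_sub_distrib, ← Finset.mul_sum, ← Finset.sum_mul, hα]
        ring

lemma integrableOn_Ioi_sum_exp_neg_mul_mul_mul_rpow (hA : ∀ i j, 0 ≤ A i j) (hθ0 : 0 < θ)
    (hθ1 : θ < 1) (hα : ∑ i, α i = 0) :
    IntegrableOn (fun l => (∑ i, ∑ j, rexp (-(l * A i j)) * α i * α j) * l ^ (-θ - 1)) (Ioi 0) := by
  have h : IntegrableOn
      (fun l => ∑ i, ∑ j, (1 - rexp (-(l * A i j))) * l ^ (-θ - 1) * α i * α j) (Ioi 0) :=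
    integrable_finsetSum _ fun i _ => integrable_finsetSum _ fun j _ =>
      ((integrableOn_Ioi_one_sub_exp_neg_mul_mul_rpow hθ0 hθ1 (hA i j)).mul_const _).mul_const _
  simpa [sum_one_sub_exp_neg_mul_rpow_mul_mul hα] using h.neg

lemma integral_Ioi_sum_exp_neg_mul_mul_mul_rpow (hA : ∀ i j, 0 ≤ A i j) (hθ0 : 0 < θ)
    (hθ1 : θ < 1) (hα : ∑ i, α i = 0) :
    ∫ l in Ioi 0, (∑ i, ∑ j, rexp (-(l * A i j)) * α i * α j) * l ^ (-θ - 1) =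
      -((∫ l in Ioi 0, (1 - rexp (-l)) * l ^ (-θ - 1)) * ∑ i, ∑ j, A i j ^ θ * α i * α j) := by
  have hint : ∀ i j, IntegrableOn
      (fun l => (1 - rexp (-(l * A i j))) * l ^ (-θ - 1) * α i * α j) (Ioi 0) := fun i j =>
    ((integrableOn_Ioi_one_sub_exp_neg_mul_mul_rpow hθ0 hθ1 (hA i j)).mul_const _).mul_const _
  calc _ = -∫ l in Ioi 0, ∑ i, ∑ j, (1 - rexp (-(l * A i j))) * l ^ (-θ - 1) * α i * α j := by
        simp only [sum_one_sub_exp_neg_mul_rpow_mul_mul hα, integral_neg, neg_neg]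
    _ = -∑ i, ∑ j, (∫ l in Ioi 0, (1 - rexp (-(l * A i j))) * l ^ (-θ - 1)) * α i * α j := by
        rw [integral_finsetSum _ fun i _ => integrable_finsetSum _ fun j _ => hint i j]
        refine congrArg _ (Finset.sum_congr rfl fun i _ => ?_)
        rw [integral_finsetSum _ fun j _ => hint i j]
        simp only [integral_mul_const]
    _ = _ := by
        simp only [integral_Ioi_one_sub_exp_neg_mul_mul_rpow hθ0 (hA _ _), Finset.mul_sum]
        exact congrArg _ (Finset.sum_congr rfl fun i _ => Finset.sum_congr rfl fun j _ => by ring)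

end IntegralRepresentation

lemma tendsto_sum_exp_neg_mul_mul_mul [DecidableEq ι] {A : Matrix ι ι ℝ} (hdiag : ∀ i, A i i = 0)
    (hpos : ∀ i j, i ≠ j → 0 < A i j) (α : ι → ℝ) :
    Tendsto (fun l => ∑ i, ∑ j, rexp (-(l * A i j)) * α i * α j) atTop
      (𝓝 (∑ i, ∑ j, (if i = j then 1 else 0) * α i * α j)) := by
  refine tendsto_finsetSum _ fun i _ => tendsto_finsetSum _ fun j _ => ?_
  refine Tendsto.mul_const _ (Tendsto.mul_const _ ?_)
  split_ifs with h
  · simp [h, hdiag]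
  · exact tendsto_exp_atBot.comp
      (tendsto_neg_atTop_atBot.comp (tendsto_id.atTop_mul_const (hpos i j h)))

theorem CondNegSemidef.sum_rpow_mul_mul_neg {A : Matrix ι ι ℝ} (hA : A.CondNegSemidef)
    (hsymm : A.IsSymm) (hdiag : ∀ i, A i i = 0) (hpos : ∀ i j, i ≠ j → 0 < A i j) {θ : ℝ}
    (hθ0 : 0 < θ) (hθ1 : θ < 1) {α : ι → ℝ} (hα : ∑ i, α i = 0) (hα0 : α ≠ 0) :
    ∑ i, ∑ j, A i j ^ θ * α i * α j < 0 := by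
  classical
  have hnonneg : ∀ i j, 0 ≤ A i j := fun i j => by
    rcases eq_or_ne i j with rfl | h
    exacts [(hdiag i).ge, (hpos i j h).le]
  have hform_nonneg : ∀ l, 0 ≤ l → 0 ≤ ∑ i, ∑ j, rexp (-(l * A i j)) * α i * α j := fun l hl => by
    simpa using ((hA.smul hl).posSemidef_map_exp_neg (hsymm.smul l)
      (by simp [hdiag])).sum_mul_mul_nonneg α
  have hlim_pos : 0 < ∑ i, ∑ j, (if i = j then (1 : ℝ) else 0) * α i * α j := by
    simpa [ite_mul, dotProduct] using dotProduct_self_star_pos_iff.2 hα0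
  have hint_pos : 0 < ∫ l in Ioi 0, (∑ i, ∑ j, rexp (-(l * A i j)) * α i * α j) * l ^ (-θ - 1) := by
    refine setIntegral_Ioi_pos_of_eventually_pos
      (integrableOn_Ioi_sum_exp_neg_mul_mul_mul_rpow hnonneg hθ0 hθ1 hα)
      (fun l hl => mul_nonneg (hform_nonneg l (le_of_lt hl)) (rpow_nonneg (le_of_lt hl) _)) ?_
    filter_upwards [(tendsto_sum_exp_neg_mul_mul_mul hdiag hpos α).eventually
      (lt_mem_nhds hlim_pos), eventually_gt_atTop 0] with l hforml hl
    exact mul_pos hforml (rpow_pos_of_pos hl _)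
  rw [integral_Ioi_sum_exp_neg_mul_mul_mul_rpow hnonneg hθ0 hθ1 hα] at hint_pos
  exact neg_of_mul_neg_right (neg_pos.1 hint_pos)
    (integral_Ioi_one_sub_exp_neg_mul_rpow_pos hθ0 hθ1).le

end Matrix

lemma sum_ite_zero_one_mul_mul {ι : Type*} [Fintype ι] [DecidableEq ι] (α : ι → ℝ) :
    ∑ i, ∑ j, (if i = j then (0 : ℝ) else 1) * α i * α j = (∑ i, α i) ^ 2 - ∑ i, α i * α i := by
  have hsplit : ∀ i j, (if i = j then (0 : ℝ) else 1) * α i * α j =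
      α i * α j - if i = j then α i * α j else 0 := fun i j => by split_ifs <;> ring
  simp only [hsplit, Finset.sum_sub_distrib, Finset.sum_ite_eq, Finset.mem_univ, if_true, sq,
    Finset.sum_mul_sum]

/-- If a finite metric space has `p`-negative type for some `p > 0`, then for every
`0 ≤ q < p` it has strict `q`-negative type. -/
theorem finite_metric_strict_neg_type_below {X : Type*} [MetricSpace X] [Fintype X]
    (p : ℝ) (hp : 0 < p)
    (hneg : ∀ (k : ℕ) (x : Fin k → X), Function.Injective x →
      ∀ α : Fin k → ℝ, (∑ i, α i) = 0 →
        (∑ i, ∑ j, (if i = j then (0 : ℝ) else dist (x i) (x j) ^ p) * α i * α j) ≤ 0)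
    (q : ℝ) (hq0 : 0 ≤ q) (hqp : q < p) :
    ∀ (k : ℕ) (x : Fin k → X), Function.Injective x →
      ∀ α : Fin k → ℝ, (∑ i, α i) = 0 →
        (∑ i, ∑ j, (if i = j then (0 : ℝ) else dist (x i) (x j) ^ q) * α i * α j) ≤ 0 ∧
        ((∑ i, ∑ j, (if i = j then (0 : ℝ) else dist (x i) (x j) ^ q) * α i * α j) = 0 →
          α = 0) := by
  intro k x hx α hα
  set D : ℝ → Matrix (Fin k) (Fin k) ℝ := fun r =>
    Matrix.of fun i j => if i = j then 0 else dist (x i) (x j) ^ r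
  suffices hlt : α ≠ 0 → ∑ i, ∑ j, D q i j * α i * α j < 0 by
    rcases eq_or_ne α 0 with rfl | hα0
    · simp
    · exact ⟨(hlt hα0).le, fun h => absurd h (hlt hα0).ne⟩
  intro hα0
  rcases hq0.eq_or_lt with rfl | hq
  · have hD0 : ∀ i j, D 0 i j = if i = j then 0 else 1 := fun i j => by simp [D]
    have hsq_pos : 0 < ∑ i, α i * α i := by
      simpa [dotProduct] using Matrix.dotProduct_self_star_pos_iff.2 hα0
    simp only [hD0, sum_ite_zero_one_mul_mul, hα]
    linarith
  have hDp : (D p).CondNegSemidef := hneg k x hx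
  refine (hDp.sum_rpow_mul_mul_neg (Matrix.IsSymm.ext_iff.2 fun i j => by
      simp [D, eq_comm, dist_comm]) (fun i => by simp [D])
    (fun i j h => by simpa [D, h] using rpow_pos_of_pos (dist_pos.2 (hx.ne h)) p)
    (div_pos hq hp) ((div_lt_one hp).2 hqp) hα hα0).trans_eq' ?_
  refine Finset.sum_congr rfl fun i _ => Finset.sum_congr rfl fun j _ => ?_
  by_cases h : i = j
  · simp [D, h, zero_rpow (div_pos hq hp).ne']
  · simp [D, h, ← rpow_mul dist_nonneg, mul_div_cancel₀ q hp.ne']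
end

section
/- Let (X,d) be a finite metric space with n points, of p-negative type, and let D_p = [d(x_i,x_j)^p] be its p-distance matrix. If D_p is of strict negative type (⟨D_p α, α⟩ < 0 for all nonzero α with ⟨α,1⟩ = 0), then D_p is invertible. -/
/-!
Strict negativity on the hyperplane `⟨α, 1⟩ = 0` already rules out a kernel vector inside that
hyperplane. A kernel vector `α` outside it splits every `v` as `β + t α` with `⟨β, 1⟩ = 0`, and
since `D` is symmetric the cross term vanishes, so the quadratic form of `D` would be `≤ 0` on all
of `ℝⁿ`. That is impossible for a matrix with zero diagonal and a positive entry `D i j`, whose form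
at `e_i + e_j` is `2 D i j > 0`.
-/

open Matrix

namespace Matrix

variable {ι : Type*} [Fintype ι]

theorem mulVec_dotProduct_nonpos_of_mulVec_eq_zero {A : Matrix ι ι ℝ} (hA : A.IsSymm)
    {w α : ι → ℝ} (hα : A *ᵥ α = 0) (hαw : α ⬝ᵥ w ≠ 0)
    (hneg : ∀ β : ι → ℝ, β ⬝ᵥ w = 0 → A *ᵥ β ⬝ᵥ β ≤ 0) (v : ι → ℝ) :
    A *ᵥ v ⬝ᵥ v ≤ 0 := by
  set t := (v ⬝ᵥ w) / (α ⬝ᵥ w)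
  set β := v - t • α
  have hβw : β ⬝ᵥ w = 0 := by
    simp only [β, t, sub_dotProduct, smul_dotProduct, smul_eq_mul, div_mul_cancel₀ _ hαw,
      sub_self]
  have hv : v = β + t • α := (sub_add_cancel v _).symm
  have hAv : A *ᵥ v = A *ᵥ β := by
    rw [hv, mulVec_add, mulVec_smul, hα, smul_zero, add_zero]
  have hcross : A *ᵥ β ⬝ᵥ α = 0 := by
    rw [dotProduct_comm, dotProduct_mulVec, ← mulVec_transpose, hA.eq, hα, zero_dotProduct]
  calc A *ᵥ v ⬝ᵥ v = A *ᵥ β ⬝ᵥ β + t * (A *ᵥ β ⬝ᵥ α) := by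
        rw [hAv, hv, dotProduct_add, dotProduct_smul, smul_eq_mul]
    _ = A *ᵥ β ⬝ᵥ β := by rw [hcross, mul_zero, add_zero]
    _ ≤ 0 := hneg β hβw

variable [DecidableEq ι]

theorem mulVec_dotProduct_single_add_single (A : Matrix ι ι ℝ) (i j : ι) :
    A *ᵥ (Pi.single i 1 + Pi.single j 1) ⬝ᵥ (Pi.single i 1 + Pi.single j 1) =
      A i i + A i j + (A j i + A j j) := by
  simp only [mulVec_add, mulVec_single_one, dotProduct_add, dotProduct_single, Pi.add_apply,
    col_apply, mul_one]

theorem exists_mulVec_dotProduct_pos {A : Matrix ι ι ℝ} (hA : A.IsSymm) (hdiag : ∀ i, A i i = 0)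
    {i j : ι} (hij : 0 < A i j) : ∃ v : ι → ℝ, 0 < A *ᵥ v ⬝ᵥ v := by
  refine ⟨Pi.single i 1 + Pi.single j 1, ?_⟩
  rw [mulVec_dotProduct_single_add_single, hdiag, hdiag, hA.apply i j]
  linarith

theorem isUnit_of_mulVec_dotProduct_neg {A : Matrix ι ι ℝ} (hA : A.IsSymm)
    (hdiag : ∀ i, A i i = 0) {i j : ι} (hij : 0 < A i j)
    (hstrict : ∀ α : ι → ℝ, α ≠ 0 → α ⬝ᵥ 1 = 0 → A *ᵥ α ⬝ᵥ α < 0) : IsUnit A := by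
  rw [isUnit_iff_isUnit_det, isUnit_iff_ne_zero]
  intro hdet
  obtain ⟨α, hα0, hα⟩ := exists_mulVec_eq_zero_iff.mpr hdet
  have hα1 : α ⬝ᵥ 1 ≠ 0 := fun hα1 => by
    simpa [hα] using hstrict α hα0 hα1
  have hneg : ∀ β : ι → ℝ, β ⬝ᵥ 1 = 0 → A *ᵥ β ⬝ᵥ β ≤ 0 := fun β hβ => by
    rcases eq_or_ne β 0 with rfl | hβ0
    · simp
    · exact (hstrict β hβ0 hβ).le
  obtain ⟨v, hv⟩ := exists_mulVec_dotProduct_pos hA hdiag hij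
  exact hv.not_ge (mulVec_dotProduct_nonpos_of_mulVec_eq_zero hA hα hα1 hneg v)

end Matrix

theorem strict_neg_type_invertible_general {n : ℕ} (hn : 2 ≤ n) {X : Type*} [MetricSpace X]
    (x : Fin n ≃ X) (p : ℝ)
    (D : Matrix (Fin n) (Fin n) ℝ)
    (hD : ∀ i j, D i j = if i = j then 0 else dist (x i) (x j) ^ p)
    (hstrict : ∀ α : Fin n → ℝ, α ≠ 0 → α ⬝ᵥ 1 = 0 → D.mulVec α ⬝ᵥ α < 0) :
    IsUnit D := by
  have hsymm : D.IsSymm := by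
    ext i j
    simp only [transpose_apply, hD, eq_comm, dist_comm]
  have hdiag : ∀ i, D i i = 0 := fun i => by simp [hD]
  have h01 : (⟨0, by omega⟩ : Fin n) ≠ ⟨1, by omega⟩ := by simp [Fin.ext_iff]
  have hpos : 0 < D ⟨0, by omega⟩ ⟨1, by omega⟩ := by
    rw [hD, if_neg h01]
    exact Real.rpow_pos_of_pos (dist_pos.mpr (x.injective.ne h01)) p
  exact isUnit_of_mulVec_dotProduct_neg hsymm hdiag hpos hstrict

/-- If the `p`-distance matrix of a finite metric space (of `p`-negative type)
is of strict negative type, then it is invertible. -/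
theorem strict_neg_type_invertible {n : ℕ} (hn : 2 ≤ n) {X : Type*} [MetricSpace X]
    (x : Fin n ≃ X) (p : ℝ) (hp : 0 ≤ p)
    (D : Matrix (Fin n) (Fin n) ℝ)
    (hD : ∀ i j, D i j = if i = j then 0 else dist (x i) (x j) ^ p)
    (hneg : ∀ α : Fin n → ℝ, α ⬝ᵥ 1 = 0 → D.mulVec α ⬝ᵥ α ≤ 0)
    (hstrict : ∀ α : Fin n → ℝ, α ≠ 0 → α ⬝ᵥ 1 = 0 → D.mulVec α ⬝ᵥ α < 0) :
    IsUnit D :=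
  strict_neg_type_invertible_general hn x p D hD hstrict
end

section
/- Let (X,d) be a finite metric space of p-negative type with p-distance matrix D_p. If D_p is invertible and ⟨D_p^{-1} 1, 1⟩ ≠ 0, then D_p is of strict negative type: ⟨D_p α, α⟩ < 0 for all nonzero α with ⟨α,1⟩ = 0. -/
open Matrix

/-!
Let `α ≠ 0` with `⟨α, 1⟩ = 0` and `⟨Dα, α⟩ = 0`. Since the symmetric form `⟨D ·, ·⟩` is negative
semidefinite on the hyperplane `1ᗮ`, the vector `α` lies in its radical there, i.e. `Dα ⟂ 1ᗮ`, so
`Dα = c • 1`. Then `α = c • D⁻¹ 1`, and `0 = ⟨α, 1⟩ = c ⟨D⁻¹ 1, 1⟩` forces `c = 0`, hence `α = 0`.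
-/

namespace Matrix

theorem IsSymm.mulVec_dotProduct_comm {R ι : Type*} [CommSemiring R] [Fintype ι]
    {A : Matrix ι ι R} (hA : A.IsSymm) (α β : ι → R) : A *ᵥ β ⬝ᵥ α = A *ᵥ α ⬝ᵥ β := by
  rw [dotProduct_comm, dotProduct_mulVec, ← vecMul_transpose, hA.eq]

variable {K ι : Type*} [Field K] [LinearOrder K] [IsStrictOrderedRing K] [Fintype ι]

theorem IsSymm.mulVec_dotProduct_eq_zero_of_nonpos_on {A : Matrix ι ι K} (hA : A.IsSymm)
    {W : Submodule K (ι → K)} (hW : ∀ β ∈ W, A *ᵥ β ⬝ᵥ β ≤ 0) {α β : ι → K}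
    (hα : α ∈ W) (hαα : A *ᵥ α ⬝ᵥ α = 0) (hβ : β ∈ W) : A *ᵥ α ⬝ᵥ β = 0 := by
  -- `t ↦ ⟨A(α + tβ), α + tβ⟩` is a nonpositive quadratic without constant term,
  -- so its discriminant `4 ⟨Aα, β⟩²` is nonpositive.
  have hquad : ∀ t : K, 0 ≤ -(A *ᵥ β ⬝ᵥ β) * (t * t) + -(2 * (A *ᵥ α ⬝ᵥ β)) * t + 0 := by
    intro t
    have h := hW (α + t • β) (W.add_mem hα (W.smul_mem t hβ))
    simp only [mulVec_add, mulVec_smul, add_dotProduct, dotProduct_add, smul_dotProduct,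
      dotProduct_smul, smul_eq_mul, hαα, hA.mulVec_dotProduct_comm α β] at h
    linarith
  have hdiscr := discrim_le_zero hquad
  rw [discrim] at hdiscr
  nlinarith [sq_nonneg (A *ᵥ α ⬝ᵥ β)]

theorem exists_eq_smul_of_forall_dotProduct_eq_zero {u v : ι → K}
    (h : ∀ β, β ⬝ᵥ v = 0 → u ⬝ᵥ β = 0) : ∃ c : K, u = c • v := by
  by_cases hv : v = 0
  · refine ⟨0, ?_⟩
    rw [zero_smul, ← dotProduct_self_eq_zero]
    exact h u (by rw [hv, dotProduct_zero])
  set c := u ⬝ᵥ v / (v ⬝ᵥ v)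
  have hvv : v ⬝ᵥ v ≠ 0 := fun h => hv (dotProduct_self_eq_zero.mp h)
  have hperp : (u - c • v) ⬝ᵥ v = 0 := by
    rw [sub_dotProduct, smul_dotProduct, smul_eq_mul, div_mul_cancel₀ _ hvv, sub_self]
  have hself : (u - c • v) ⬝ᵥ (u - c • v) = 0 := by
    rw [sub_dotProduct, h _ hperp, smul_dotProduct, dotProduct_comm, hperp, smul_zero, sub_zero]
  exact ⟨c, sub_eq_zero.mp (dotProduct_self_eq_zero.mp hself)⟩

theorem IsSymm.mulVec_dotProduct_neg_of_inv_mulVec_dotProduct_ne_zero [DecidableEq ι]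
    {A : Matrix ι ι K} (hA : A.IsSymm) {v : ι → K}
    (hneg : ∀ α, α ⬝ᵥ v = 0 → A *ᵥ α ⬝ᵥ α ≤ 0) (hunit : IsUnit A)
    (hv : A⁻¹ *ᵥ v ⬝ᵥ v ≠ 0) {α : ι → K} (hα0 : α ≠ 0) (hα : α ⬝ᵥ v = 0) :
    A *ᵥ α ⬝ᵥ α < 0 := by
  refine (hneg α hα).lt_of_ne fun hαα => hα0 ?_
  let W := LinearMap.ker ((dotProductBilin K K).flip v)
  have hmem : ∀ β, β ∈ W ↔ β ⬝ᵥ v = 0 := fun β => by simp [W]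
  obtain ⟨c, hc⟩ := exists_eq_smul_of_forall_dotProduct_eq_zero fun β hβ =>
    hA.mulVec_dotProduct_eq_zero_of_nonpos_on (W := W) (fun β hβ => hneg β ((hmem β).mp hβ))
      ((hmem α).mpr hα) hαα ((hmem β).mpr hβ)
  have hαc : α = c • A⁻¹ *ᵥ v := by
    have := hunit.invertible
    rw [← mulVec_smul, inv_mulVec_eq_vec hc.symm]
  have hc0 : c = 0 := by
    rw [hαc, smul_dotProduct, smul_eq_mul] at hα
    exact (mul_eq_zero.mp hα).resolve_right hv
  rw [hαc, hc0, zero_smul]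

end Matrix

theorem inv_ones_strict_neg_type_general {n : ℕ} {X : Type*} [MetricSpace X]
    (x : Fin n ≃ X) (p : ℝ)
    (D : Matrix (Fin n) (Fin n) ℝ)
    (hD : ∀ i j, D i j = if i = j then 0 else dist (x i) (x j) ^ p)
    (hneg : ∀ α : Fin n → ℝ, α ⬝ᵥ 1 = 0 → D.mulVec α ⬝ᵥ α ≤ 0)
    (hunit : IsUnit D) (hip : D⁻¹.mulVec 1 ⬝ᵥ 1 ≠ 0) :
    ∀ α : Fin n → ℝ, α ≠ 0 → α ⬝ᵥ 1 = 0 → D.mulVec α ⬝ᵥ α < 0 := by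
  have hsymm : D.IsSymm := IsSymm.ext fun i j => by
    rw [hD, hD, dist_comm]
    exact if_congr eq_comm rfl rfl
  exact fun α hα0 hα =>
    hsymm.mulVec_dotProduct_neg_of_inv_mulVec_dotProduct_ne_zero hneg hunit hip hα0 hα

/-- If the `p`-distance matrix of a finite metric space of `p`-negative type is
invertible with `⟨D⁻¹ 1, 1⟩ ≠ 0`, then it is of strict negative type. -/
theorem inv_ones_strict_neg_type {n : ℕ} {X : Type*} [MetricSpace X]
    (x : Fin n ≃ X) (p : ℝ) (hp : 0 ≤ p)
    (D : Matrix (Fin n) (Fin n) ℝ)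
    (hD : ∀ i j, D i j = if i = j then 0 else dist (x i) (x j) ^ p)
    (hneg : ∀ α : Fin n → ℝ, α ⬝ᵥ 1 = 0 → D.mulVec α ⬝ᵥ α ≤ 0)
    (hunit : IsUnit D) (hip : D⁻¹.mulVec 1 ⬝ᵥ 1 ≠ 0) :
    ∀ α : Fin n → ℝ, α ≠ 0 → α ⬝ᵥ 1 = 0 → D.mulVec α ⬝ᵥ α < 0 :=
  inv_ones_strict_neg_type_general x p D hD hneg hunit hip
end

section
/- Let D be a real symmetric n×n matrix of negative type. If D is invertible, ⟨D^{-1}1, 1⟩ ≠ 0, α satisfies ⟨α,1⟩ = 0, and ⟨Dα,α⟩ = 0, then α = 0. -/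
/-!
If `⟨Dα, α⟩ = 0` and the form `⟨Dβ, β⟩` is nonpositive on the hyperplane `⟨β, 1⟩ = 0`, then
`α` is a maximum of that form on the hyperplane, so `Dα` is orthogonal to the hyperplane and
hence a multiple `c • 1`. Thus `α = c • D⁻¹ 1`, and `⟨α, 1⟩ = c ⟨D⁻¹ 1, 1⟩ = 0` forces `c = 0`.
-/

open Matrix

namespace Matrix

variable {ι : Type*} [Fintype ι]

theorem IsSymm.mulVec_dotProduct_comm_s5 {R : Type*} [CommSemiring R] {D : Matrix ι ι R}
    (hD : D.IsSymm) (v w : ι → R) : D *ᵥ v ⬝ᵥ w = D *ᵥ w ⬝ᵥ v := by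
  rw [dotProduct_comm, dotProduct_mulVec, ← mulVec_transpose, hD.eq]

theorem IsSymm.mulVec_dotProduct_eq_zero_of_nonpos_on_s5 {K : Type*} [Field K] [LinearOrder K]
    [IsStrictOrderedRing K] {D : Matrix ι ι K} (hD : D.IsSymm)
    {W : Submodule K (ι → K)} (hneg : ∀ β ∈ W, D *ᵥ β ⬝ᵥ β ≤ 0)
    {α : ι → K} (hα : α ∈ W) (hα0 : D *ᵥ α ⬝ᵥ α = 0) {β : ι → K} (hβ : β ∈ W) :
    D *ᵥ α ⬝ᵥ β = 0 := by
  have hquad : ∀ t : K, (D *ᵥ β ⬝ᵥ β) * (t * t) + 2 * (D *ᵥ α ⬝ᵥ β) * t + 0 ≤ 0 := by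
    intro t
    have hexp : D *ᵥ (α + t • β) ⬝ᵥ (α + t • β)
        = (D *ᵥ β ⬝ᵥ β) * (t * t) + 2 * (D *ᵥ α ⬝ᵥ β) * t + 0 := by
      simp only [mulVec_add, mulVec_smul, add_dotProduct, dotProduct_add, smul_dotProduct,
        dotProduct_smul, smul_eq_mul, hα0, hD.mulVec_dotProduct_comm_s5 β α]
      ring
    exact hexp ▸ hneg _ (W.add_mem hα (W.smul_mem t hβ))
  -- `t ↦ ⟨D(α + tβ), α + tβ⟩` is a nonpositive quadratic, so its discriminant `4⟨Dα, β⟩²` is `≤ 0`.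
  have hdiscrim := discrim_le_zero_of_nonpos hquad
  rw [discrim] at hdiscrim
  nlinarith [sq_nonneg (D *ᵥ α ⬝ᵥ β)]

theorem exists_eq_smul_one_of_dotProduct_eq_zero {R : Type*} [CommRing R] [DecidableEq ι]
    {v : ι → R} (hv : ∀ β : ι → R, β ⬝ᵥ 1 = 0 → v ⬝ᵥ β = 0) : ∃ c : R, v = c • 1 := by
  cases isEmpty_or_nonempty ι with
  | inl _ => exact ⟨0, Subsingleton.elim _ _⟩
  | inr hne =>
    obtain ⟨i⟩ := hne
    refine ⟨v i, funext fun j => ?_⟩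
    have hji := hv (Pi.single j 1 - Pi.single i 1) (by simp)
    simpa [sub_eq_zero] using hji

end Matrix

/-- For an invertible symmetric matrix `D` of negative type with `⟨D⁻¹ 1, 1⟩ ≠ 0`,
the only vector `α` with `⟨α, 1⟩ = 0` and `⟨D α, α⟩ = 0` is `α = 0`. -/
theorem neg_type_null_vector_eq_zero {n : ℕ} (D : Matrix (Fin n) (Fin n) ℝ)
    (hsymm : D.IsSymm)
    (hneg : ∀ β : Fin n → ℝ, β ⬝ᵥ 1 = 0 → D.mulVec β ⬝ᵥ β ≤ 0)
    (hunit : IsUnit D) (hip : D⁻¹.mulVec 1 ⬝ᵥ 1 ≠ 0)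
    (α : Fin n → ℝ) (h1 : α ⬝ᵥ 1 = 0) (h2 : D.mulVec α ⬝ᵥ α = 0) :
    α = 0 := by
  have hmem {β : Fin n → ℝ} : β ∈ LinearMap.ker (dotProductBilin ℝ ℝ 1) ↔ β ⬝ᵥ 1 = 0 := by
    rw [LinearMap.mem_ker, dotProduct_comm]; rfl
  obtain ⟨c, hc⟩ := exists_eq_smul_one_of_dotProduct_eq_zero fun β hβ =>
    hsymm.mulVec_dotProduct_eq_zero_of_nonpos_on_s5 (fun β hβ => hneg β (hmem.1 hβ))
      (hmem.2 h1) h2 (hmem.2 hβ)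
  have : Invertible D := hunit.invertible
  have hα : α = c • D⁻¹ *ᵥ 1 := by rw [← mulVec_smul, inv_mulVec_eq_vec hc.symm]
  have hc0 : c = 0 := by
    rw [hα, smul_dotProduct, smul_eq_mul] at h1
    exact (mul_eq_zero.1 h1).resolve_right hip
  rw [hα, hc0, zero_smul]
end

section
/- Let D be a real symmetric n×n matrix of negative type whose kernel is nontrivial, and suppose D has some diagonal entry 0 and some off-diagonal entry positive in the first 2×2 block (specifically D_{11}=D_{22}=0 and D_{12}>0, as holds for distance matrices). Then every vector α in the kernel of D satisfies ⟨α, 1⟩ = 0. -/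
/-!
If a kernel vector `α` had `⟨α, 1⟩ ≠ 0`, subtracting a suitable multiple of `α` would move any
vector onto the hyperplane `⟨β, 1⟩ = 0` without changing the quadratic form (`D` is symmetric), so
`D` would be negative semidefinite on all of `ℝⁿ`. But the form at `e₁ + e₂` is `2 D₁₂ > 0`.
-/

open Matrix

variable {ι : Type*} [Fintype ι]

theorem Matrix.IsSymm.mulVec_sub_smul_dotProduct {D : Matrix ι ι ℝ} (hsymm : D.IsSymm)
    {α : ι → ℝ} (hα : D *ᵥ α = 0) (x : ι → ℝ) (c : ℝ) :
    D *ᵥ (x - c • α) ⬝ᵥ (x - c • α) = D *ᵥ x ⬝ᵥ x := by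
  have hcross : D *ᵥ x ⬝ᵥ α = 0 := by
    rw [dotProduct_comm, dotProduct_mulVec, ← mulVec_transpose, hsymm.eq, hα, zero_dotProduct]
  simp only [mulVec_sub, mulVec_smul, hα, smul_zero, sub_zero, dotProduct_sub, dotProduct_smul,
    hcross]

theorem Matrix.IsSymm.mulVec_dotProduct_nonpos_of_mulVec_eq_zero {D : Matrix ι ι ℝ}
    (hsymm : D.IsSymm) (hneg : ∀ β : ι → ℝ, β ⬝ᵥ 1 = 0 → D *ᵥ β ⬝ᵥ β ≤ 0)
    {α : ι → ℝ} (hα : D *ᵥ α = 0) (hα1 : α ⬝ᵥ 1 ≠ 0) (x : ι → ℝ) :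
    D *ᵥ x ⬝ᵥ x ≤ 0 := by
  have hβ1 : (x - (x ⬝ᵥ 1 / α ⬝ᵥ 1) • α) ⬝ᵥ 1 = 0 := by
    rw [sub_dotProduct, smul_dotProduct, smul_eq_mul, div_mul_cancel₀ _ hα1, sub_self]
  simpa only [hsymm.mulVec_sub_smul_dotProduct hα] using hneg _ hβ1

theorem Matrix.mulVec_single_add_single_dotProduct [DecidableEq ι] (D : Matrix ι ι ℝ)
    (i j : ι) :
    D *ᵥ (Pi.single i 1 + Pi.single j 1) ⬝ᵥ (Pi.single i 1 + Pi.single j 1) =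
      D i i + D j i + D i j + D j j := by
  simp only [mulVec_add, mulVec_single_one, dotProduct_add, dotProduct_single, mul_one,
    Pi.add_apply, col_apply]
  ring

/-- For a symmetric matrix of negative type with `D₁₁ = D₂₂ = 0` and `D₁₂ > 0`
(as holds for distance matrices) with nontrivial kernel, every kernel vector is
orthogonal to the all-ones vector. -/
theorem neg_type_kernel_orthogonal_ones {n : ℕ} (hn : 2 ≤ n)
    (D : Matrix (Fin n) (Fin n) ℝ) (hsymm : D.IsSymm)
    (hneg : ∀ β : Fin n → ℝ, β ⬝ᵥ 1 = 0 → D.mulVec β ⬝ᵥ β ≤ 0)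
    (h00 : D ⟨0, by omega⟩ ⟨0, by omega⟩ = 0)
    (h11 : D ⟨1, by omega⟩ ⟨1, by omega⟩ = 0)
    (h01 : 0 < D ⟨0, by omega⟩ ⟨1, by omega⟩) :
    ∀ α : Fin n → ℝ, D.mulVec α = 0 → α ⬝ᵥ 1 = 0 := by
  intro α hα
  by_contra hα1
  have h := hsymm.mulVec_dotProduct_nonpos_of_mulVec_eq_zero hneg hα hα1
    (Pi.single ⟨0, by omega⟩ 1 + Pi.single ⟨1, by omega⟩ 1)
  rw [D.mulVec_single_add_single_dotProduct, h00, h11, ← hsymm.apply] at h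
  linarith
end

section
/- The complete bipartite graph K_{n,m} with path metric has p-negative type with a nontrivial equality case at p = log₂(2nm/(2nm−n−m)): the vector α assigning 1/n to each of the n vertices in one part and −1/m to each of the m vertices in the other part satisfies ⟨α,1⟩ = 0 and ⟨D_p α, α⟩ = 0 for this p. -/
open Matrix

set_option maxHeartbeats 1000000 in
/-- `K_{n,m}` has `p`-negative type at `p = log₂(2nm/(2nm-n-m))` with a nontrivial
equality case given by the vector with value `1/n` on one part and `-1/m` on the other. -/
theorem bipartite_equality_case {n m : ℕ} (hn : 1 ≤ n) (hm : 1 ≤ m)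
    (hnm : ¬ (n = 1 ∧ m = 1))
    (D : ℝ → Matrix (Fin (n + m)) (Fin (n + m)) ℝ)
    (hD : ∀ p i j, D p i j =
      if i = j then 0 else if ((i : ℕ) < n ↔ (j : ℕ) < n) then (2 : ℝ) ^ p else 1)
    (p : ℝ)
    (hp : p = Real.logb 2 ((2 * n * m) / (2 * (n : ℝ) * m - n - m)))
    (α : Fin (n + m) → ℝ)
    (hα : ∀ i, α i = if (i : ℕ) < n then (1 : ℝ) / n else -(1 / m)) :
    (∀ β : Fin (n + m) → ℝ, β ⬝ᵥ 1 = 0 → (D p).mulVec β ⬝ᵥ β ≤ 0) ∧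
      α ⬝ᵥ 1 = 0 ∧ (D p).mulVec α ⬝ᵥ α = 0 ∧ α ≠ 0 := by
  have hn' : (1 : ℝ) ≤ (n : ℝ) := by exact_mod_cast hn
  have hm' : (1 : ℝ) ≤ (m : ℝ) := by exact_mod_cast hm
  have hN0 : (0 : ℝ) < (n : ℝ) := by linarith
  have hM0 : (0 : ℝ) < (m : ℝ) := by linarith
  have hdnat : n + m < 2 * n * m := by
    have h2 : 2 ≤ n ∨ 2 ≤ m := by omega
    rcases h2 with h | h <;> nlinarith
  have hd : (0 : ℝ) < 2 * (n : ℝ) * m - n - m := by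
    have : ((n : ℝ) + m) < 2 * (n : ℝ) * m := by exact_mod_cast hdnat
    linarith
  set c : ℝ := (2 * (n : ℝ) * m) / (2 * (n : ℝ) * m - n - m) with hc_def
  have hc0 : 0 < c := div_pos (by positivity) hd
  have hcp : (2 : ℝ) ^ p = c := by
    rw [hp]
    exact Real.rpow_logb (by norm_num) (by norm_num) hc0
  have hcd : c * (2 * (n : ℝ) * m - n - m) = 2 * (n : ℝ) * m :=
    div_mul_cancel₀ _ (ne_of_gt hd)
  have hkey : 2 * c * (n : ℝ) * m - 2 * (n : ℝ) * m = c * ((n : ℝ) + m) := by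
    linear_combination hcd
  -- abbreviations for part sums
  have hQ : ∀ β : Fin (n + m) → ℝ,
      (D p).mulVec β ⬝ᵥ β =
        c * ((∑ i : Fin n, β (Fin.castAdd m i)) * (∑ i : Fin n, β (Fin.castAdd m i)))
        + c * ((∑ j : Fin m, β (Fin.natAdd n j)) * (∑ j : Fin m, β (Fin.natAdd n j)))
        + (∑ i : Fin n, β (Fin.castAdd m i)) * (∑ j : Fin m, β (Fin.natAdd n j))
        + (∑ j : Fin m, β (Fin.natAdd n j)) * (∑ i : Fin n, β (Fin.castAdd m i))
        - c * ((∑ i : Fin n, β (Fin.castAdd m i) * β (Fin.castAdd m i))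
            + (∑ j : Fin m, β (Fin.natAdd n j) * β (Fin.natAdd n j))) := by
    intro β
    set P : Fin (n + m) → ℝ := fun i => (if (i : ℕ) < n then (1 : ℝ) else 0) * β i with hP
    set Q : Fin (n + m) → ℝ := fun i => (if (i : ℕ) < n then (0 : ℝ) else 1) * β i with hQv
    have hPsum : ∑ i, P i = ∑ i : Fin n, β (Fin.castAdd m i) := by
      rw [Fin.sum_univ_add]
      have h1 : ∀ i : Fin n, P (Fin.castAdd m i) = β (Fin.castAdd m i) := by
        intro i; simp [hP, Fin.coe_castAdd, i.isLt]
      have h2 : ∀ j : Fin m, P (Fin.natAdd n j) = 0 := by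
        intro j; simp [hP, Fin.coe_natAdd]
      simp [Finset.sum_congr rfl fun i _ => h1 i, Finset.sum_congr rfl fun j _ => h2 j]
    have hQsum : ∑ i, Q i = ∑ j : Fin m, β (Fin.natAdd n j) := by
      rw [Fin.sum_univ_add]
      have h1 : ∀ i : Fin n, Q (Fin.castAdd m i) = 0 := by
        intro i; simp [hQv, Fin.coe_castAdd, i.isLt]
      have h2 : ∀ j : Fin m, Q (Fin.natAdd n j) = β (Fin.natAdd n j) := by
        intro j; simp [hQv, Fin.coe_natAdd]
      simp [Finset.sum_congr rfl fun i _ => h1 i, Finset.sum_congr rfl fun j _ => h2 j]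
    have hsq : ∑ i, β i * β i =
        (∑ i : Fin n, β (Fin.castAdd m i) * β (Fin.castAdd m i))
        + (∑ j : Fin m, β (Fin.natAdd n j) * β (Fin.natAdd n j)) :=
      Fin.sum_univ_add _
    have hdot : (D p).mulVec β ⬝ᵥ β = ∑ i, ∑ j, D p i j * β j * β i := by
      simp only [dotProduct, mulVec, Finset.sum_mul]
    rw [hdot, ← hPsum, ← hQsum, hsq.symm]
    have hdiag : c * (∑ i, β i * β i) = ∑ i, ∑ j, (if i = j then c * β j * β i else 0) := by
      rw [Finset.mul_sum]
      refine Finset.sum_congr rfl fun i _ => ?_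
      rw [Finset.sum_ite_eq]
      simp only [Finset.mem_univ, if_true]
      ring
    rw [hdiag, Finset.sum_mul_sum, Finset.sum_mul_sum, Finset.sum_mul_sum, Finset.sum_mul_sum,
      Finset.mul_sum, Finset.mul_sum]
    simp only [Finset.mul_sum]
    rw [← Finset.sum_add_distrib, ← Finset.sum_add_distrib, ← Finset.sum_add_distrib,
      ← Finset.sum_sub_distrib]
    refine Finset.sum_congr rfl fun i _ => ?_
    rw [← Finset.sum_add_distrib, ← Finset.sum_add_distrib, ← Finset.sum_add_distrib,
      ← Finset.sum_sub_distrib]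
    refine Finset.sum_congr rfl fun j _ => ?_
    rw [hD p i j, hcp]
    by_cases hij : i = j
    · subst hij
      by_cases hi : (i : ℕ) < n <;> simp [hP, hQv, hi] <;> ring
    · by_cases hi : (i : ℕ) < n <;> by_cases hj : (j : ℕ) < n <;>
        simp [hP, hQv, hi, hj, hij] <;> ring
  have hdot1 : ∀ β : Fin (n + m) → ℝ,
      β ⬝ᵥ 1 = (∑ i : Fin n, β (Fin.castAdd m i)) + ∑ j : Fin m, β (Fin.natAdd n j) := by
    intro β
    simp only [dotProduct, Pi.one_apply, mul_one]
    exact Fin.sum_univ_add _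
  -- Cauchy-Schwarz for each part
  have hCS : ∀ (k : ℕ) (x : Fin k → ℝ),
      (∑ i, x i) * (∑ i, x i) ≤ (k : ℝ) * ∑ i, x i * x i := by
    intro k x
    have := sq_sum_le_card_mul_sum_sq (s := (Finset.univ : Finset (Fin k))) (f := x)
    simpa [sq, Finset.card_univ] using this
  refine ⟨?_, ?_, ?_, ?_⟩
  · -- negative type inequality
    intro β hβ
    rw [hQ β]
    set s := ∑ i : Fin n, β (Fin.castAdd m i) with hs
    set t := ∑ j : Fin m, β (Fin.natAdd n j) with ht
    set A := ∑ i : Fin n, β (Fin.castAdd m i) * β (Fin.castAdd m i) with hA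
    set B := ∑ j : Fin m, β (Fin.natAdd n j) * β (Fin.natAdd n j) with hB
    have hst : s + t = 0 := by rw [hdot1 β] at hβ; exact hβ
    have hts : t = -s := by linarith
    have hCS1 : s * s ≤ (n : ℝ) * A := hCS n _
    have hCS2 : s * s ≤ (m : ℝ) * B := by
      have h := hCS m fun j => β (Fin.natAdd n j)
      rw [← ht, ← hB, hts] at h
      nlinarith [h]
    have e1 : 0 ≤ c * (m : ℝ) * ((n : ℝ) * A - s * s) :=
      mul_nonneg (le_of_lt (mul_pos hc0 hM0)) (by linarith)
    have e2 : 0 ≤ c * (n : ℝ) * ((m : ℝ) * B - s * s) :=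
      mul_nonneg (le_of_lt (mul_pos hc0 hN0)) (by linarith)
    have hkey2 : (2 * c * (n : ℝ) * m - 2 * (n : ℝ) * m) * (s * s)
        = c * ((n : ℝ) + m) * (s * s) := by rw [hkey]
    have hAB : c * ((n : ℝ) + m) * (s * s) ≤ c * ((n : ℝ) * m) * (A + B) := by
      nlinarith [e1, e2]
    have hQNM : (c * (s * s) + c * (-s * -s) + s * -s + -s * s - c * (A + B))
        * ((n : ℝ) * m) ≤ 0 := by nlinarith [hAB, hkey2]
    rw [hts]
    nlinarith [hQNM, mul_pos hN0 hM0]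
  · rw [hdot1 α]
    have h1 : ∑ i : Fin n, α (Fin.castAdd m i) = 1 := by
      have : ∀ i : Fin n, α (Fin.castAdd m i) = 1 / (n : ℝ) := by
        intro i; rw [hα]; simp [Fin.coe_castAdd, i.isLt]
      rw [Finset.sum_congr rfl fun i _ => this i]
      simp [Finset.card_univ]
      field_simp
    have h2 : ∑ j : Fin m, α (Fin.natAdd n j) = -1 := by
      have : ∀ j : Fin m, α (Fin.natAdd n j) = -(1 / (m : ℝ)) := by
        intro j; rw [hα]; simp [Fin.coe_natAdd]
      rw [Finset.sum_congr rfl fun j _ => this j]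
      simp [Finset.card_univ]
      field_simp
    rw [h1, h2]; ring
  · rw [hQ α]
    have h1 : ∑ i : Fin n, α (Fin.castAdd m i) = 1 := by
      have : ∀ i : Fin n, α (Fin.castAdd m i) = 1 / (n : ℝ) := by
        intro i; rw [hα]; simp [Fin.coe_castAdd, i.isLt]
      rw [Finset.sum_congr rfl fun i _ => this i]
      simp [Finset.card_univ]
      field_simp
    have h2 : ∑ j : Fin m, α (Fin.natAdd n j) = -1 := by
      have : ∀ j : Fin m, α (Fin.natAdd n j) = -(1 / (m : ℝ)) := by
        intro j; rw [hα]; simp [Fin.coe_natAdd]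
      rw [Finset.sum_congr rfl fun j _ => this j]
      simp [Finset.card_univ]
      field_simp
    have h3 : ∑ i : Fin n, α (Fin.castAdd m i) * α (Fin.castAdd m i) = 1 / (n : ℝ) := by
      have : ∀ i : Fin n, α (Fin.castAdd m i) * α (Fin.castAdd m i)
          = 1 / (n : ℝ) * (1 / (n : ℝ)) := by
        intro i; rw [hα]; simp [Fin.coe_castAdd, i.isLt]
      rw [Finset.sum_congr rfl fun i _ => this i]
      simp [Finset.card_univ]
      field_simp
    have h4 : ∑ j : Fin m, α (Fin.natAdd n j) * α (Fin.natAdd n j) = 1 / (m : ℝ) := by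
      have : ∀ j : Fin m, α (Fin.natAdd n j) * α (Fin.natAdd n j)
          = 1 / (m : ℝ) * (1 / (m : ℝ)) := by
        intro j; rw [hα]; simp [Fin.coe_natAdd]
      rw [Finset.sum_congr rfl fun j _ => this j]
      simp [Finset.card_univ]
      field_simp
    rw [h1, h2, h3, h4]
    have hn0 : (n : ℝ) ≠ 0 := ne_of_gt hN0
    have hm0 : (m : ℝ) ≠ 0 := ne_of_gt hM0
    field_simp
    linear_combination hkey
  · intro h0
    have hlt : (0 : ℕ) < n + m := by omega
    have := congrFun h0 ⟨0, hlt⟩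
    rw [hα] at this
    simp only [show ((⟨0, hlt⟩ : Fin (n + m)) : ℕ) = 0 from rfl] at this
    rw [if_pos (by omega)] at this
    simp [Pi.zero_apply] at this
    omega
end

section
/- For the complete bipartite graph K_{n,m} with path metric and p such that (n−1)(m−1)·4^p ≠ nm, the inverse of the p-distance matrix D_p exists and ⟨D_p^{-1} 1, 1⟩ = ((2nm−n−m)·2^p − 2nm) / ((n−1)(m−1)·4^p − nm). -/
/-!
With `u`, `v` the indicator vectors of the two sides and `t = 2^p`, the distance matrix is
`D_p = t (u uᵀ + v vᵀ) + (u vᵀ + v uᵀ) - t I`. Since `u ⬝ u = n`, `v ⬝ v = m` and `u ⬝ v = 0`,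
the matrices `I, u uᵀ, v vᵀ, u vᵀ, v uᵀ` span an algebra, and solving for the inverse of `D_p`
in it gives a closed form with denominators `t` and `(n-1)(m-1)t² - nm`. Pairing it with
`1 = u + v` gives the formula.
-/

open Matrix

section TwoClass

variable {ι : Type*} [Fintype ι] [DecidableEq ι]

noncomputable def twoClassMatrix (u v : ι → ℝ) (t : ℝ) : Matrix ι ι ℝ :=
  t • (vecMulVec u u + vecMulVec v v) + (vecMulVec u v + vecMulVec v u) - t • 1

/-- The determinant of the quotient matrix `!![(a-1)t, b; a, (b-1)t]` of `twoClassMatrix` on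
the two classes. -/
def twoClassDet (a b t : ℝ) : ℝ := (a - 1) * (b - 1) * t ^ 2 - a * b

noncomputable def twoClassInverse (u v : ι → ℝ) (a b t : ℝ) : Matrix ι ι ℝ :=
  let Δ := twoClassDet a b t
  ((t ^ 2 * (b - 1) - b) / (t * Δ)) • vecMulVec u u +
    ((t ^ 2 * (a - 1) - a) / (t * Δ)) • vecMulVec v v -
    Δ⁻¹ • (vecMulVec u v + vecMulVec v u) - t⁻¹ • 1

variable {u v : ι → ℝ} {a b t : ℝ}

theorem twoClassMatrix_mul_twoClassInverse (huu : u ⬝ᵥ u = a) (hvv : v ⬝ᵥ v = b)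
    (huv : u ⬝ᵥ v = 0) (ht : t ≠ 0) (hΔ : twoClassDet a b t ≠ 0) :
    twoClassMatrix u v t * twoClassInverse u v a b t = 1 := by
  have hvu : v ⬝ᵥ u = 0 := by rwa [dotProduct_comm]
  simp only [twoClassMatrix, twoClassInverse, add_mul, sub_mul, mul_add, mul_sub,
    Matrix.smul_mul, Matrix.mul_smul, one_mul, mul_one, vecMulVec_mul_vecMulVec, huu, hvv, huv,
    hvu, zero_smul, vecMulVec_zero, vecMulVec_smul, smul_smul]
  match_scalars <;> field_simp <;> unfold twoClassDet <;> ring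

theorem twoClassInverse_mulVec_one_dotProduct_one (huu : u ⬝ᵥ u = a) (hvv : v ⬝ᵥ v = b)
    (huv : u ⬝ᵥ v = 0) (hone : u + v = 1) (ht : t ≠ 0)
    (hΔ : twoClassDet a b t ≠ 0) :
    twoClassInverse u v a b t *ᵥ 1 ⬝ᵥ 1 =
      ((2 * a * b - a - b) * t - 2 * a * b) / twoClassDet a b t := by
  have hu1 : u ⬝ᵥ 1 = a := by rw [← hone, dotProduct_add, huv, add_zero, huu]
  have hv1 : v ⬝ᵥ 1 = b := by rw [← hone, dotProduct_add, dotProduct_comm, huv, zero_add, hvv]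
  have h11 : (1 : ι → ℝ) ⬝ᵥ 1 = a + b := by
    rw [← hu1, ← hv1, ← add_dotProduct, hone]
  simp only [twoClassInverse, sub_mulVec, add_mulVec, smul_mulVec, vecMulVec_mulVec, one_mulVec,
    sub_dotProduct, add_dotProduct, smul_dotProduct, hu1, hv1, h11, op_smul_eq_smul, smul_eq_mul]
  field_simp
  unfold twoClassDet
  ring

theorem isUnit_twoClassMatrix (huu : u ⬝ᵥ u = a) (hvv : v ⬝ᵥ v = b) (huv : u ⬝ᵥ v = 0)
    (ht : t ≠ 0) (hΔ : twoClassDet a b t ≠ 0) : IsUnit (twoClassMatrix u v t) :=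
  (isUnit_iff_isUnit_det _).2 <|
    isUnit_det_of_right_inverse (twoClassMatrix_mul_twoClassInverse huu hvv huv ht hΔ)

theorem inv_twoClassMatrix (huu : u ⬝ᵥ u = a) (hvv : v ⬝ᵥ v = b) (huv : u ⬝ᵥ v = 0)
    (ht : t ≠ 0) (hΔ : twoClassDet a b t ≠ 0) :
    (twoClassMatrix u v t)⁻¹ = twoClassInverse u v a b t :=
  inv_eq_right_inv (twoClassMatrix_mul_twoClassInverse huu hvv huv ht hΔ)

end TwoClass

section CompleteBipartite

variable (n m : ℕ)

def leftIndicator : Fin (n + m) → ℝ := fun k => if (k : ℕ) < n then 1 else 0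

def rightIndicator : Fin (n + m) → ℝ := fun k => if (k : ℕ) < n then 0 else 1

theorem leftIndicator_add_rightIndicator : leftIndicator n m + rightIndicator n m = 1 := by
  ext k
  by_cases hk : (k : ℕ) < n <;> simp [leftIndicator, rightIndicator, hk]

theorem leftIndicator_dotProduct_self : leftIndicator n m ⬝ᵥ leftIndicator n m = n := by
  simp [leftIndicator, dotProduct, Fin.sum_univ_add]

theorem rightIndicator_dotProduct_self : rightIndicator n m ⬝ᵥ rightIndicator n m = m := by
  simp [rightIndicator, dotProduct, Fin.sum_univ_add]

theorem leftIndicator_dotProduct_rightIndicator :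
    leftIndicator n m ⬝ᵥ rightIndicator n m = 0 := by
  simp [leftIndicator, rightIndicator, dotProduct, Fin.sum_univ_add]

theorem twoClassMatrix_indicator_apply (t : ℝ) (i j : Fin (n + m)) :
    twoClassMatrix (leftIndicator n m) (rightIndicator n m) t i j =
      if i = j then 0 else if ((i : ℕ) < n ↔ (j : ℕ) < n) then t else 1 := by
  rcases eq_or_ne i j with rfl | hij
  · by_cases hi : (i : ℕ) < n <;>
      simp [twoClassMatrix, leftIndicator, rightIndicator, vecMulVec_apply, hi]
  · by_cases hi : (i : ℕ) < n <;> by_cases hj : (j : ℕ) < n <;>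
      simp [twoClassMatrix, leftIndicator, rightIndicator, vecMulVec_apply, one_apply, hi, hj, hij]

end CompleteBipartite

theorem bipartite_inverse_ones_general {n m : ℕ}
    (D : ℝ → Matrix (Fin (n + m)) (Fin (n + m)) ℝ)
    (hD : ∀ p i j, D p i j =
      if i = j then 0 else if ((i : ℕ) < n ↔ (j : ℕ) < n) then (2 : ℝ) ^ p else 1)
    (p : ℝ)
    (h : ((n : ℝ) - 1) * ((m : ℝ) - 1) * (4 : ℝ) ^ p ≠ (n : ℝ) * m) :
    IsUnit (D p) ∧
      (D p)⁻¹.mulVec 1 ⬝ᵥ 1 =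
        ((2 * (n : ℝ) * m - n - m) * (2 : ℝ) ^ p - 2 * n * m) /
          (((n : ℝ) - 1) * ((m : ℝ) - 1) * (4 : ℝ) ^ p - n * m) := by
  have hDp : D p = twoClassMatrix (leftIndicator n m) (rightIndicator n m) (2 ^ p) := by
    ext i j
    rw [hD, twoClassMatrix_indicator_apply]
  have h4 : (4 : ℝ) ^ p = ((2 : ℝ) ^ p) ^ 2 := by
    rw [show (4 : ℝ) = 2 * 2 by norm_num, Real.mul_rpow zero_le_two zero_le_two, sq]
  have ht : (2 : ℝ) ^ p ≠ 0 := by positivity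
  have hΔ : twoClassDet n m (2 ^ p) ≠ 0 := by
    rw [twoClassDet, ← h4]
    exact sub_ne_zero_of_ne h
  have huu := leftIndicator_dotProduct_self n m
  have hvv := rightIndicator_dotProduct_self n m
  have huv := leftIndicator_dotProduct_rightIndicator n m
  rw [hDp, inv_twoClassMatrix huu hvv huv ht hΔ,
    twoClassInverse_mulVec_one_dotProduct_one huu hvv huv (leftIndicator_add_rightIndicator n m)
      ht hΔ, twoClassDet, h4]
  exact ⟨isUnit_twoClassMatrix huu hvv huv ht hΔ, rfl⟩

/-- For `K_{n,m}` with `(n-1)(m-1)·4^p ≠ nm`, the `p`-distance matrix is invertible and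
`⟨D_p⁻¹ 1, 1⟩ = ((2nm - n - m)·2^p - 2nm) / ((n-1)(m-1)·4^p - nm)`. -/
theorem bipartite_inverse_ones {n m : ℕ} (hn : 1 ≤ n) (hm : 1 ≤ m)
    (D : ℝ → Matrix (Fin (n + m)) (Fin (n + m)) ℝ)
    (hD : ∀ p i j, D p i j =
      if i = j then 0 else if ((i : ℕ) < n ↔ (j : ℕ) < n) then (2 : ℝ) ^ p else 1)
    (p : ℝ) (hp : 0 ≤ p)
    (h : ((n : ℝ) - 1) * ((m : ℝ) - 1) * (4 : ℝ) ^ p ≠ (n : ℝ) * m) :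
    IsUnit (D p) ∧
      (D p)⁻¹.mulVec 1 ⬝ᵥ 1 =
        ((2 * (n : ℝ) * m - n - m) * (2 : ℝ) ^ p - 2 * n * m) /
          (((n : ℝ) - 1) * ((m : ℝ) - 1) * (4 : ℝ) ^ p - n * m) :=
  bipartite_inverse_ones_general D hD p h
end

section
/- For the complete bipartite graph K_{n,n} (n ≥ 2) with path metric, the p-distance matrix D_p is singular exactly when 2^p = n/(n−1), i.e., there exists a nonzero vector α with D_p α = 0 at p = log₂(n/(n−1)); explicitly α takes value 1/n on one part and −1/n on the other. -/
/-! Write `t = 2 ^ p`. If `D_p v = 0`, then `t vᵢ` depends only on the part of `i`, so the kernel is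
governed by the two part sums `s, s'` of `v`, which satisfy `(a-1) t s + a s' = 0` and
`b s + (b-1) t s' = 0` for parts of sizes `a, b`. When this system has determinant
`(a-1)(b-1)t² - ab ≠ 0` the kernel is trivial; for `a = b = n` the determinant factors as
`(t(n-1) - n)(t(n-1) + n)`, and at `t(n-1) = n` the vector `±c` on the two parts is a kernel vector. -/

open Matrix Finset

section

variable {ι : Type*} [DecidableEq ι] (P : ι → Prop) [DecidablePred P]

/-- The `p`-distance matrix of a complete bipartite graph with parts `{P}` and `{¬P}`, at
`t = 2 ^ p`. -/
def bipartiteDistMatrix (t : ℝ) : Matrix ι ι ℝ :=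
  of fun i j => if i = j then 0 else if (P i ↔ P j) then t else 1

theorem bipartiteDistMatrix_apply (t : ℝ) (i j : ι) :
    bipartiteDistMatrix P t i j =
      (if P j then (if P i then t else 1) else (if P i then 1 else t)) - if i = j then t else 0 := by
  by_cases hij : i = j
  · subst hij
    by_cases P i <;> simp [bipartiteDistMatrix, *]
  · by_cases P i <;> by_cases P j <;> simp [bipartiteDistMatrix, *]

variable [Fintype ι]

theorem bipartiteDistMatrix_mulVec_apply (t : ℝ) (v : ι → ℝ) (i : ι) :
    (bipartiteDistMatrix P t *ᵥ v) i =
      (if P i then t * ∑ j with P j, v j + ∑ j with ¬P j, v j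
        else ∑ j with P j, v j + t * ∑ j with ¬P j, v j) - t * v i := by
  by_cases hi : P i <;>
    simp [mulVec, dotProduct, bipartiteDistMatrix_apply, hi, sub_mul, sum_ite, mul_sum]

theorem eq_zero_of_bipartiteDistMatrix_mulVec_eq_zero {t : ℝ} (ht : t ≠ 0)
    (hdet : ((#{j | P j} : ℝ) - 1) * (#{j | ¬P j} - 1) * t ^ 2 ≠ #{j | P j} * #{j | ¬P j})
    {v : ι → ℝ} (hv : bipartiteDistMatrix P t *ᵥ v = 0) : v = 0 := by
  set s := ∑ j with P j, v j
  set s' := ∑ j with ¬P j, v j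
  have hpoint (i : ι) : t * v i = if P i then t * s + s' else s + t * s' := by
    have := bipartiteDistMatrix_mulVec_apply P t v i
    rw [hv, Pi.zero_apply] at this
    linarith
  have hs : t * s = #{j | P j} * (t * s + s') := calc
    t * s = ∑ j with P j, t * v j := mul_sum _ _ _
    _ = _ := by
      rw [sum_congr rfl fun j hj => (hpoint j).trans (if_pos (mem_filter.1 hj).2), sum_const,
        nsmul_eq_mul]
  have hs' : t * s' = #{j | ¬P j} * (s + t * s') := calc
    t * s' = ∑ j with ¬P j, t * v j := mul_sum _ _ _
    _ = _ := by
      rw [sum_congr rfl fun j hj => (hpoint j).trans (if_neg (mem_filter.1 hj).2), sum_const,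
        nsmul_eq_mul]
  have hdet' := sub_ne_zero.2 hdet
  have hs0 : s = 0 := by
    refine (mul_eq_zero.1 ?_).resolve_left hdet'
    linear_combination (-(#{j | ¬P j} - 1 : ℝ) * t) * hs + (#{j | P j} : ℝ) * hs'
  have hs'0 : s' = 0 := by
    refine (mul_eq_zero.1 ?_).resolve_left hdet'
    linear_combination (#{j | ¬P j} : ℝ) * hs - ((#{j | P j} : ℝ) - 1) * t * hs'
  funext i
  have := hpoint i
  simp only [hs0, hs'0, mul_zero, add_zero, ite_self] at this
  exact (mul_eq_zero.1 this).resolve_left ht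

theorem isUnit_bipartiteDistMatrix {t : ℝ} (ht : t ≠ 0)
    (hdet : ((#{j | P j} : ℝ) - 1) * (#{j | ¬P j} - 1) * t ^ 2 ≠ #{j | P j} * #{j | ¬P j}) :
    IsUnit (bipartiteDistMatrix P t) := by
  refine mulVec_injective_iff_isUnit.1 fun v w hvw => sub_eq_zero.1 ?_
  exact eq_zero_of_bipartiteDistMatrix_mulVec_eq_zero P ht hdet (by rw [mulVec_sub, hvw, sub_self])

variable {P}

theorem bipartiteDistMatrix_mulVec_sign_eq_zero {n : ℕ} (hP : #{j | P j} = n)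
    (hnP : #{j | ¬P j} = n) {t : ℝ} (ht : t * (n - 1) = n) (c : ℝ) :
    bipartiteDistMatrix P t *ᵥ (fun i => if P i then c else -c) = 0 := by
  have hs : ∑ j with P j, (if P j then c else -c) = n * c := by
    rw [sum_congr rfl fun j hj => if_pos (mem_filter.1 hj).2, sum_const, hP, nsmul_eq_mul]
  have hs' : ∑ j with ¬P j, (if P j then c else -c) = -(n * c) := by
    rw [sum_congr rfl fun j hj => if_neg (mem_filter.1 hj).2, sum_const, hnP, nsmul_eq_mul,
      mul_neg]
  funext i
  rw [bipartiteDistMatrix_mulVec_apply, hs, hs', Pi.zero_apply]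
  split_ifs
  · linear_combination c * ht
  · linear_combination -c * ht

theorem isUnit_bipartiteDistMatrix_iff {n : ℕ} (hP : #{j | P j} = n) (hnP : #{j | ¬P j} = n)
    {t : ℝ} (ht : 0 < t) : IsUnit (bipartiteDistMatrix P t) ↔ t * (n - 1) ≠ n := by
  constructor
  · intro hunit hker
    have hn : n ≠ 0 := by
      rintro rfl
      simp only [CharP.cast_eq_zero, zero_sub, mul_neg, mul_one, neg_eq_zero] at hker
      exact ht.ne' hker
    obtain ⟨i, hi⟩ := card_pos.1 (hP ▸ Nat.pos_of_ne_zero hn)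
    replace hi := (mem_filter.1 hi).2
    have h0 := mulVec_injective_iff_isUnit.2 hunit
      ((bipartiteDistMatrix_mulVec_sign_eq_zero hP hnP hker 1).trans (mulVec_zero _).symm)
    simpa [hi] using congrFun h0 i
  · intro hne
    refine isUnit_bipartiteDistMatrix P ht.ne' ?_
    have hpos : t * (n - 1) + n ≠ 0 := by
      rcases n.eq_zero_or_pos with rfl | hn
      · simpa using ht.ne'
      · have : (1 : ℝ) ≤ n := by exact_mod_cast hn
        nlinarith
    rw [hP, hnP, ← sub_ne_zero]
    convert mul_ne_zero (sub_ne_zero.2 hne) hpos using 1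
    ring

end

/-- For `K_{n,n}` (`n ≥ 2`), the `p`-distance matrix is singular exactly when
`2^p = n/(n-1)`, with explicit kernel vector `1/n` on one part and `-1/n` on the other at
`p = log₂(n/(n-1))`. -/
theorem bipartite_nn_singular {n : ℕ} (hn : 2 ≤ n)
    (D : ℝ → Matrix (Fin (n + n)) (Fin (n + n)) ℝ)
    (hD : ∀ p i j, D p i j =
      if i = j then 0 else if ((i : ℕ) < n ↔ (j : ℕ) < n) then (2 : ℝ) ^ p else 1)
    (α : Fin (n + n) → ℝ)
    (hα : ∀ i, α i = if (i : ℕ) < n then (1 : ℝ) / n else -(1 / n)) :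
    (∀ p : ℝ, 0 ≤ p → (¬ IsUnit (D p) ↔ (2 : ℝ) ^ p = (n : ℝ) / ((n : ℝ) - 1))) ∧
      α ≠ 0 ∧ (D (Real.logb 2 ((n : ℝ) / ((n : ℝ) - 1)))).mulVec α = 0 := by
  have hDt (p : ℝ) : D p = bipartiteDistMatrix (fun i : Fin (n + n) => (i : ℕ) < n) (2 ^ p) :=
    ext fun i j => hD p i j
  have hP : #{i : Fin (n + n) | (i : ℕ) < n} = n := by simp [Fin.card_filter_val_lt]
  have hnP : #{i : Fin (n + n) | ¬(i : ℕ) < n} = n := by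
    have := card_filter_add_card_filter_not (s := univ) fun i : Fin (n + n) => (i : ℕ) < n
    simp only [hP, card_univ, Fintype.card_fin] at this
    omega
  have hn1 : (0 : ℝ) < n - 1 := by
    have : (2 : ℝ) ≤ n := by exact_mod_cast hn
    linarith
  refine ⟨fun p _ => ?_, fun h => ?_, ?_⟩
  · rw [hDt, isUnit_bipartiteDistMatrix_iff hP hnP (by positivity), not_not, eq_div_iff hn1.ne']
  · have h0 := congrFun h ⟨0, by omega⟩
    simp only [hα, (by omega : 0 < n), if_true, Pi.zero_apply, div_eq_zero_iff, one_ne_zero,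
      Nat.cast_eq_zero, false_or] at h0
    omega
  · rw [hDt, funext hα]
    refine bipartiteDistMatrix_mulVec_sign_eq_zero hP hnP ?_ _
    rw [Real.rpow_logb two_pos (by norm_num) (div_pos (by linarith) hn1),
      div_mul_cancel₀ _ hn1.ne']
end

section
/- If D_p is the p-distance matrix of K_{n,m} with n ≠ m and D_p α = 0 for some α with ⟨α, 1⟩ = 0, then α = 0. That is, for n ≠ m the kernel of D_p contains no nonzero vector orthogonal to the all-ones vector, for any p ≥ 0. -/
open Matrix

/-- For `K_{n,m}` with `n ≠ m`, the kernel of the `p`-distance matrix contains no nonzero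
vector orthogonal to the all-ones vector, for any `p ≥ 0`. -/
theorem bipartite_kernel_trivial {n m : ℕ} (hn : 1 ≤ n) (hm : 1 ≤ m) (hnm : n ≠ m)
    (D : ℝ → Matrix (Fin (n + m)) (Fin (n + m)) ℝ)
    (hD : ∀ p i j, D p i j =
      if i = j then 0 else if ((i : ℕ) < n ↔ (j : ℕ) < n) then (2 : ℝ) ^ p else 1) :
    ∀ p : ℝ, 0 ≤ p → ∀ α : Fin (n + m) → ℝ,
      (D p).mulVec α = 0 → α ⬝ᵥ 1 = 0 → α = 0 := by
  intro p hp α hmul hdot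
  set q : ℝ := (2 : ℝ) ^ p with hqdef
  have hq : 0 < q := by positivity
  have hrow : ∀ i, ∑ j, D p i j * α j = 0 := by
    intro i
    have := congrFun hmul i
    simpa [Matrix.mulVec, dotProduct] using this
  -- constancy on each part
  have hconst : ∀ i i' : Fin (n + m), ((i : ℕ) < n ↔ (i' : ℕ) < n) → α i = α i' := by
    intro i i' hiff
    rcases eq_or_ne i i' with h | h
    · rw [h]
    have key : ∑ j, (D p i j * α j - D p i' j * α j) = 0 := by
      rw [Finset.sum_sub_distrib, hrow i, hrow i', sub_zero]
    have hpt : ∀ j, D p i j * α j - D p i' j * α j =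
        (if j = i then -(q * α i) else 0) + (if j = i' then q * α i' else 0) := by
      intro j
      rw [hD, hD, ← hqdef]
      rcases eq_or_ne j i with hj | hj
      · rw [if_pos hj.symm, if_neg (fun hh : i' = j => h (hh ▸ hj).symm),
          if_pos ((hj ▸ hiff.symm : (i' : ℕ) < n ↔ (j : ℕ) < n)),
          if_pos hj, if_neg (fun hh : j = i' => h (hj.symm.trans hh)), hj]
        ring
      rcases eq_or_ne j i' with hj' | hj'
      · rw [if_neg (Ne.symm hj), if_pos hj'.symm,
          if_pos ((hj' ▸ hiff : (i : ℕ) < n ↔ (j : ℕ) < n)),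
          if_neg hj, if_pos hj', hj']
        ring
      · rw [if_neg (Ne.symm hj), if_neg (Ne.symm hj'), if_neg hj, if_neg hj']
        have heq : (((i : ℕ) < n ↔ (j : ℕ) < n)) ↔ (((i' : ℕ) < n ↔ (j : ℕ) < n)) := by
          constructor <;> intro hh <;> [exact hiff.symm.trans hh; exact hiff.trans hh]
        by_cases hc : ((i : ℕ) < n ↔ (j : ℕ) < n)
        · rw [if_pos hc, if_pos (heq.mp hc)]; ring
        · rw [if_neg hc, if_neg (fun hh => hc (heq.mpr hh))]; ring
    rw [Finset.sum_congr rfl (fun j _ => hpt j), Finset.sum_add_distrib,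
      Finset.sum_ite_eq' Finset.univ i (fun _ => -(q * α i)),
      Finset.sum_ite_eq' Finset.univ i' (fun _ => q * α i')] at key
    simp only [Finset.mem_univ, if_true] at key
    have : q * α i = q * α i' := by linarith
    exact mul_left_cancel₀ hq.ne' this
  -- representatives
  have hi0 : (0 : ℕ) < n + m := by omega
  have hj0 : n < n + m := by omega
  set i0 : Fin (n + m) := ⟨0, hi0⟩
  set j0 : Fin (n + m) := ⟨n, hj0⟩
  have hi0n : (i0 : ℕ) < n := hn
  have hj0n : ¬ (j0 : ℕ) < n := by simp [j0]
  set a : ℝ := α i0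
  set b : ℝ := α j0
  have hα : ∀ j : Fin (n + m), α j = if (j : ℕ) < n then a else b := by
    intro j
    by_cases hj : (j : ℕ) < n
    · rw [if_pos hj]; exact hconst j i0 (by simp [hj, hi0n])
    · rw [if_neg hj]; exact hconst j j0 (by simp [hj, hj0n])
  -- sum splitting helper
  have hsplit : ∀ c d : ℝ, ∑ j : Fin (n + m), (if (j : ℕ) < n then c else d)
      = n * c + m * d := by
    intro c d
    rw [Fin.sum_univ_add]
    have h1 : ∀ j : Fin n, (if ((Fin.castAdd m j : Fin (n+m)) : ℕ) < n then c else d) = c := by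
      intro j; rw [if_pos]; simpa using j.isLt
    have h2 : ∀ j : Fin m, (if ((Fin.natAdd n j : Fin (n+m)) : ℕ) < n then c else d) = d := by
      intro j; rw [if_neg]; simp
    rw [Finset.sum_congr rfl (fun j _ => h1 j), Finset.sum_congr rfl (fun j _ => h2 j)]
    simp [mul_comm]
  -- orthogonality equation
  have hdot' : (n : ℝ) * a + m * b = 0 := by
    have : ∑ j, α j * 1 = 0 := hdot
    rw [Finset.sum_congr rfl (fun j _ => by rw [mul_one, hα j]), hsplit] at this
    exact this
  -- row equation at i0
  have hrow1 : (n : ℝ) * (q * a) + m * b - q * a = 0 := by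
    have h1 := hrow i0
    have hpt : ∀ j, D p i0 j * α j =
        (if (j : ℕ) < n then q * a else b) - (if j = i0 then q * a else 0) := by
      intro j
      rw [hD, hα j]
      rcases eq_or_ne j i0 with hj | hj
      · subst hj; simp [hi0n]
      · rw [if_neg (Ne.symm hj), if_neg hj, sub_zero]
        by_cases hc : (j : ℕ) < n
        · rw [if_pos hc, if_pos (by simp [hi0n, hc]), if_pos hc]
        · rw [if_neg hc, if_neg (by simp [hi0n, hc]), if_neg hc, one_mul]
    rw [Finset.sum_congr rfl (fun j _ => hpt j), Finset.sum_sub_distrib, hsplit,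
      Finset.sum_ite_eq' Finset.univ i0 (fun _ => q * a)] at h1
    simpa using h1
  -- row equation at j0
  have hrow2 : (n : ℝ) * a + m * (q * b) - q * b = 0 := by
    have h1 := hrow j0
    have hpt : ∀ j, D p j0 j * α j =
        (if (j : ℕ) < n then a else q * b) - (if j = j0 then q * b else 0) := by
      intro j
      rw [hD, hα j]
      rcases eq_or_ne j j0 with hj | hj
      · subst hj; simp [hj0n]
      · rw [if_neg (Ne.symm hj), if_neg hj, sub_zero]
        by_cases hc : (j : ℕ) < n
        · rw [if_pos hc, if_neg (by simp [hj0n, hc]), if_pos hc, one_mul]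
        · rw [if_neg hc, if_pos (by simp [hj0n, hc]), if_neg hc]
    rw [Finset.sum_congr rfl (fun j _ => hpt j), Finset.sum_sub_distrib, hsplit,
      Finset.sum_ite_eq' Finset.univ j0 (fun _ => q * b)] at h1
    simpa using h1
  -- algebra
  have hn' : (1 : ℝ) ≤ (n : ℝ) := by exact_mod_cast hn
  have hm' : (1 : ℝ) ≤ (m : ℝ) := by exact_mod_cast hm
  have hnm' : (n : ℝ) ≠ (m : ℝ) := by exact_mod_cast hnm
  have hA : a * (q * ((n : ℝ) - 1) - n) = 0 := by nlinarith [hrow1, hdot']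
  have hB : b * (q * ((m : ℝ) - 1) - m) = 0 := by nlinarith [hrow2, hdot']
  have hab : a = 0 ∧ b = 0 := by
    rcases mul_eq_zero.mp hA with ha | ha
    · have hb : b = 0 := by
        have : (m : ℝ) * b = 0 := by rw [ha] at hdot'; linarith
        rcases mul_eq_zero.mp this with h | h
        · exact absurd h (by positivity)
        · exact h
      exact ⟨ha, hb⟩
    rcases mul_eq_zero.mp hB with hb | hb
    · have ha2 : a = 0 := by
        have : (n : ℝ) * a = 0 := by rw [hb] at hdot'; linarith
        rcases mul_eq_zero.mp this with h | h
        · exact absurd h (by positivity)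
        · exact h
      refine ⟨ha2, hb⟩
    · exfalso
      have e1 : q * ((n : ℝ) - 1) = n := by linarith
      have e2 : q * ((m : ℝ) - 1) = m := by linarith
      have e3 : q * ((n : ℝ) - m) = (n : ℝ) - m := by
        have : q * ((n : ℝ) - m) = q * ((n : ℝ) - 1) - q * ((m : ℝ) - 1) := by ring
        rw [this, e1, e2]
      have hne : (n : ℝ) - m ≠ 0 := sub_ne_zero.mpr hnm'
      have hq1 : q = 1 := mul_right_cancel₀ hne (by rw [one_mul]; exact e3)
      rw [hq1] at e1; linarith
  funext j
  rw [hα j]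
  rcases hab with ⟨ha, hb⟩
  by_cases hj : (j : ℕ) < n <;> simp [hj, ha, hb]
end

section
/- The cycle graph C_{2n+1} on 2n+1 vertices (n ≥ 2) with the path metric does not have p-negative type for any p > log₂ 3. Specifically, the signed weight vector assigning +1/2 to vertices v_1 and v_n and −1/2 to vertices v_2 and v_{n+1} yields Σ_{i,j} d^p α_i α_j > 0 for p > log₂ 3. -/
/-!
On the four vertices `v₁, v₂, vₙ, vₙ₊₁` every distance is `1`, `n - 1` or `n`, so the form of the
test vector is `(n ^ p - (n - 1) ^ p - 2) / 2`. By convexity of `t ↦ t ^ p` the unit increment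
`n ^ p - (n - 1) ^ p` is at least `2 ^ p - 1`, which exceeds `2` exactly when `p > log₂ 3`.
-/

open Finset

theorem ConvexOn.map_add_sub_map_le {𝕜 : Type*} [Field 𝕜] [LinearOrder 𝕜] [IsStrictOrderedRing 𝕜]
    {s : Set 𝕜} {f : 𝕜 → 𝕜} (hf : ConvexOn 𝕜 s f) {x y h : 𝕜} (hx : x ∈ s) (hyh : y + h ∈ s)
    (hxy : x ≤ y) (hh : 0 < h) : f (x + h) - f x ≤ f (y + h) - f y := by
  have hxh : x + h ∈ s := hf.1.ordConnected.out hx hyh ⟨by linarith, by linarith⟩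
  have hy : y ∈ s := hf.1.ordConnected.out hx hyh ⟨hxy, by linarith⟩
  rw [← div_le_div_iff_of_pos_right hh]
  calc (f (x + h) - f x) / h = (f (x + h) - f x) / (x + h - x) := by rw [add_sub_cancel_left]
    _ ≤ (f (y + h) - f x) / (y + h - x) :=
      hf.secant_mono hx hxh hyh (by linarith) (by linarith) (by linarith)
    _ = (f x - f (y + h)) / (x - (y + h)) := by rw [← neg_sub, ← neg_sub x, neg_div_neg_eq]
    _ ≤ (f y - f (y + h)) / (y - (y + h)) :=
      hf.secant_mono hyh hx hy (by linarith) (by linarith) hxy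
    _ = (f (y + h) - f y) / h := by
      rw [← neg_sub, ← neg_sub (y + h) y, neg_div_neg_eq, add_sub_cancel_left]

theorem two_rpow_sub_one_le_rpow_sub_rpow {p m : ℝ} (hp : 1 ≤ p) (hm : 2 ≤ m) :
    2 ^ p - 1 ≤ m ^ p - (m - 1) ^ p := by
  have := (convexOn_rpow hp).map_add_sub_map_le (x := 1) (y := m - 1) (h := 1)
    (by simp) (by simp; linarith) (by linarith) one_pos
  rwa [one_add_one_eq_two, Real.one_rpow, sub_add_cancel] at this

section Quadrilateral

variable {ι : Type*} [Fintype ι] [DecidableEq ι]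

noncomputable def quadrilateralVector (a b c e : ι) : ι → ℝ :=
  (Pi.single a 1 - Pi.single b 1 + Pi.single c 1 - Pi.single e 1) / 2

theorem sum_mul_quadrilateralVector (g : ι → ℝ) (a b c e : ι) :
    ∑ i, g i * quadrilateralVector a b c e i = (g a - g b + g c - g e) / 2 := by
  simp [quadrilateralVector, mul_sub, mul_add, mul_div_assoc', ← sum_div, sum_add_distrib,
    sum_sub_distrib, Pi.single_apply]

theorem sum_quadrilateralVector (a b c e : ι) : ∑ i, quadrilateralVector a b c e i = 0 := by
  simpa using sum_mul_quadrilateralVector 1 a b c e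

theorem sum_sum_mul_quadrilateralVector {K : ι → ι → ℝ} (hK : ∀ i j, K i j = K j i)
    (hK₀ : ∀ i, K i i = 0) (a b c e : ι) :
    ∑ i, ∑ j, K i j * quadrilateralVector a b c e i * quadrilateralVector a b c e j =
      (K a c + K b e - K a b - K b c - K c e - K e a) / 2 := by
  set v := quadrilateralVector a b c e
  have : ∀ i, ∑ j, K i j * v i * v j = v i * ∑ j, K i j * v j := fun i => by
    rw [mul_sum]; exact sum_congr rfl fun j _ => by ring
  simp only [this, mul_comm (v _), sum_mul_quadrilateralVector, v, hK₀]
  rw [hK b a, hK c a, hK c b, hK e b, hK e c, hK a e]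
  ring

end Quadrilateral

noncomputable def cycleDist (N : ℕ) (i j : Fin N) : ℝ :=
  min (((i : ℤ) - j).natAbs : ℝ) (N - ((i : ℤ) - j).natAbs)

section CycleDist

variable {N : ℕ}

theorem cycleDist_comm (i j : Fin N) : cycleDist N i j = cycleDist N j i := by
  rw [cycleDist, cycleDist, ← Int.natAbs_neg, neg_sub]

theorem cycleDist_self (i : Fin N) : cycleDist N i i = 0 := by
  simp [cycleDist]

theorem cycleDist_of_add_eq {i j : Fin N} {k : ℕ} (h : (i : ℕ) + k = j) (hk : 2 * k ≤ N) :
    cycleDist N i j = k := by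
  have : ((i : ℤ) - j).natAbs = k := by omega
  rw [cycleDist, this, min_eq_left]
  linarith [show (2 * k : ℝ) ≤ N by exact_mod_cast hk]

theorem cycleDist_of_add_eq_of_le {i j : Fin N} {k : ℕ} (h : (i : ℕ) + k = j) (hk : N ≤ 2 * k) :
    cycleDist N i j = N - k := by
  have : ((i : ℤ) - j).natAbs = k := by omega
  rw [cycleDist, this, min_eq_right]
  linarith [show (N : ℝ) ≤ 2 * k by exact_mod_cast hk]

end CycleDist

theorem sum_sum_cycleDist_rpow_mul_quadrilateralVector {n : ℕ} {p : ℝ} (hn : 2 ≤ n) (hp : p ≠ 0)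
    {a b c e : Fin (2 * n + 1)} (ha : (a : ℕ) = 0) (hb : (b : ℕ) = 1) (hc : (c : ℕ) = n)
    (he : (e : ℕ) = n + 1) :
    ∑ i, ∑ j, cycleDist (2 * n + 1) i j ^ p * quadrilateralVector a b c e i *
      quadrilateralVector a b c e j = ((n : ℝ) ^ p - (n - 1 : ℝ) ^ p - 2) / 2 := by
  rw [sum_sum_mul_quadrilateralVector (K := fun i j => cycleDist _ i j ^ p)
    (fun i j => by rw [cycleDist_comm]) (fun i => by simp [cycleDist_self, hp]), cycleDist_comm e,
    cycleDist_of_add_eq (k := n) (by omega) (by omega),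
    cycleDist_of_add_eq (k := n) (by omega) (by omega),
    cycleDist_of_add_eq (k := 1) (by omega) (by omega),
    cycleDist_of_add_eq (k := n - 1) (by omega) (by omega),
    cycleDist_of_add_eq (k := 1) (by omega) (by omega),
    cycleDist_of_add_eq_of_le (k := n + 1) (by omega) (by omega)]
  push_cast [Nat.cast_sub (by omega : 1 ≤ n)]
  rw [Real.one_rpow, show (2 * n + 1 - (n + 1) : ℝ) = n by ring]
  ring

/-- The odd cycle `C_{2n+1}` (`n ≥ 2`) with the path metric fails to have `p`-negative
type for every `p > log₂ 3`: the signed weight vector with `+1/2` on the two antipodal-ish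
edges `{v₁, v_{n+1}}` and `-1/2` on `{v₂, v_{n+2}}` (0-indexed: `+1/2` at `0, n` and
`-1/2` at `1, n+1`) makes the negative type quadratic form positive. -/
theorem odd_cycle_fails_neg_type {n : ℕ} (hn : 2 ≤ n)
    (d : Fin (2 * n + 1) → Fin (2 * n + 1) → ℝ)
    (hd : ∀ i j, d i j =
      min ((((i : ℤ) - (j : ℤ)).natAbs : ℝ))
        ((2 * n + 1 : ℝ) - (((i : ℤ) - (j : ℤ)).natAbs : ℝ)))
    (α : Fin (2 * n + 1) → ℝ)
    (hα : ∀ i, α i = if (i : ℕ) = 0 ∨ (i : ℕ) = n then (1 : ℝ) / 2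
      else if (i : ℕ) = 1 ∨ (i : ℕ) = n + 1 then -(1 / 2) else 0)
    (p : ℝ) (hp : Real.logb 2 3 < p) :
    (∑ i, α i) = 0 ∧
      0 < ∑ i, ∑ j, d i j ^ p * α i * α j ∧
      ¬ (∀ β : Fin (2 * n + 1) → ℝ, (∑ i, β i) = 0 →
        (∑ i, ∑ j, d i j ^ p * β i * β j) ≤ 0) := by
  have h2p : 3 < (2 : ℝ) ^ p := (Real.logb_lt_iff_lt_rpow one_lt_two (by norm_num)).1 hp
  have hp1 : 1 < p :=
    (Real.rpow_lt_rpow_left_iff one_lt_two).1 (by rw [Real.rpow_one]; linarith)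
  obtain rfl : d = cycleDist (2 * n + 1) := by
    ext i j
    rw [hd, cycleDist]
    push_cast
    rfl
  set v := quadrilateralVector (⟨0, by omega⟩ : Fin (2 * n + 1)) ⟨1, by omega⟩ ⟨n, by omega⟩
    ⟨n + 1, by omega⟩
  obtain rfl : α = v := by
    ext i
    rw [hα]
    simp only [v, quadrilateralVector, Pi.div_apply, Pi.add_apply, Pi.sub_apply, Pi.single_apply,
      Fin.ext_iff]
    split_ifs <;> first | omega | norm_num
  have hpos : 0 < ∑ i, ∑ j, cycleDist (2 * n + 1) i j ^ p * v i * v j := by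
    rw [sum_sum_cycleDist_rpow_mul_quadrilateralVector hn (zero_lt_one.trans hp1).ne'
      rfl rfl rfl rfl]
    linarith [two_rpow_sub_one_le_rpow_sub_rpow hp1.le (by exact_mod_cast hn : (2 : ℝ) ≤ n)]
  exact ⟨sum_quadrilateralVector .., hpos, fun h => (h _ (sum_quadrilateralVector ..)).not_gt hpos⟩
end

section
/- The star graph K_{1,n} (n ≥ 2) with path metric has supremal p-negative type log₂(2n/(n−1)); in particular, at p = log₂(2n/(n−1)) the weight vector assigning 1 to the center and −1/n to each leaf gives Σ_{i,j} d(x_i,x_j)^p α_i α_j = 0 with Σ α_i = 0. -/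
/-! With `t = 2 ^ q`, the quadratic form of the distance matrix `D q` of the star on a zero-sum
vector `β` is `(t - 2) β₀² - t ∑ βᵢ²`, the sum running over the leaves. By Cauchy–Schwarz
`β₀² = (∑ βᵢ)² ≤ n ∑ βᵢ²`, with equality for constant leaf weights, so the form is nonpositive on
all zero-sum vectors iff `t (n - 1) ≤ 2 n`, i.e. iff `q ≤ log₂ (2n / (n - 1))`, and the vector
`(1, -1/n, …, -1/n)` is extremal. -/

open Matrix Finset

namespace StarGraph

variable {n : ℕ}

def starMatrix (n : ℕ) (t : ℝ) : Matrix (Fin (n + 1)) (Fin (n + 1)) ℝ :=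
  Matrix.of fun i j => if i = j then 0 else if (i : ℕ) = 0 ∨ (j : ℕ) = 0 then 1 else t

def IsCondNegSemidef {ι : Type*} [Fintype ι] (M : Matrix ι ι ℝ) : Prop :=
  ∀ β : ι → ℝ, β ⬝ᵥ 1 = 0 → M *ᵥ β ⬝ᵥ β ≤ 0

noncomputable def centerWeight (n : ℕ) : Fin (n + 1) → ℝ := Fin.cons 1 fun _ => -(1 / n)

lemma dotProduct_one_eq_zero_iff (β : Fin (n + 1) → ℝ) :
    β ⬝ᵥ 1 = 0 ↔ ∑ i : Fin n, β i.succ = -β 0 := by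
  simp only [dotProduct, Pi.one_apply, mul_one, Fin.sum_univ_succ]
  constructor <;> intro h <;> linarith

lemma starMatrix_mulVec_zero (t : ℝ) (β : Fin (n + 1) → ℝ) :
    (starMatrix n t *ᵥ β) 0 = ∑ i : Fin n, β i.succ := by
  simp [starMatrix, mulVec, dotProduct, Fin.sum_univ_succ, (Fin.succ_ne_zero _).symm]

lemma starMatrix_mulVec_succ (t : ℝ) (β : Fin (n + 1) → ℝ) (i : Fin n) :
    (starMatrix n t *ᵥ β) i.succ = β 0 + t * (∑ j : Fin n, β j.succ - β i.succ) := by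
  have hrow : ∀ j : Fin n, starMatrix n t i.succ j.succ * β j.succ
      = t * β j.succ - if i = j then t * β j.succ else 0 := by
    intro j
    rcases eq_or_ne i j with rfl | h
    · simp [starMatrix]
    · simp [starMatrix, h]
  simp only [mulVec, dotProduct, Fin.sum_univ_succ, hrow, sum_sub_distrib, sum_ite_eq,
    mem_univ, if_true, ← mul_sum]
  simp only [starMatrix, of_apply, Fin.val_eq_zero_iff, Fin.succ_ne_zero, if_false, or_true,
    if_true, one_mul]
  ring

lemma starMatrix_quadForm (t : ℝ) (β : Fin (n + 1) → ℝ) :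
    starMatrix n t *ᵥ β ⬝ᵥ β = 2 * β 0 * ∑ i : Fin n, β i.succ
      + t * (∑ i : Fin n, β i.succ) ^ 2 - t * ∑ i : Fin n, β i.succ ^ 2 := by
  rw [dotProduct, Fin.sum_univ_succ, starMatrix_mulVec_zero]
  simp only [starMatrix_mulVec_succ, add_mul, sub_mul, mul_sub, sum_add_distrib, sum_sub_distrib]
  simp only [← mul_sum, mul_assoc, ← pow_two]
  ring

lemma starMatrix_quadForm_of_dotProduct_one_eq_zero (t : ℝ) {β : Fin (n + 1) → ℝ}
    (hβ : β ⬝ᵥ 1 = 0) :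
    starMatrix n t *ᵥ β ⬝ᵥ β = (t - 2) * β 0 ^ 2 - t * ∑ i : Fin n, β i.succ ^ 2 := by
  rw [starMatrix_quadForm, (dotProduct_one_eq_zero_iff β).1 hβ]
  ring

lemma sq_center_le_of_dotProduct_one_eq_zero {β : Fin (n + 1) → ℝ} (hβ : β ⬝ᵥ 1 = 0) :
    β 0 ^ 2 ≤ n * ∑ i : Fin n, β i.succ ^ 2 := by
  have h := sq_sum_le_card_mul_sum_sq (s := univ) (f := fun i : Fin n => β i.succ)
  rwa [(dotProduct_one_eq_zero_iff β).1 hβ, neg_sq, card_univ, Fintype.card_fin] at h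

lemma centerWeight_dotProduct_one (hn : n ≠ 0) : centerWeight n ⬝ᵥ 1 = 0 := by
  rw [dotProduct_one_eq_zero_iff]
  simp only [centerWeight, Fin.cons_succ, Fin.cons_zero, sum_const, card_univ, Fintype.card_fin,
    nsmul_eq_mul]
  field_simp

lemma starMatrix_quadForm_centerWeight (hn : n ≠ 0) (t : ℝ) :
    starMatrix n t *ᵥ centerWeight n ⬝ᵥ centerWeight n = (t * (n - 1) - 2 * n) / n := by
  rw [starMatrix_quadForm_of_dotProduct_one_eq_zero t (centerWeight_dotProduct_one hn)]
  simp only [centerWeight, Fin.cons_zero, Fin.cons_succ, sum_const, card_univ, Fintype.card_fin,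
    nsmul_eq_mul]
  field_simp
  ring

theorem starMatrix_isCondNegSemidef_iff (hn : n ≠ 0) {t : ℝ} (ht : 0 ≤ t) :
    IsCondNegSemidef (starMatrix n t) ↔ t * (n - 1) ≤ 2 * n := by
  have hn' : (0 : ℝ) < n := by positivity
  constructor
  · intro h
    have hform := h _ (centerWeight_dotProduct_one hn)
    rw [starMatrix_quadForm_centerWeight hn, div_nonpos_iff] at hform
    rcases hform with ⟨-, hneg⟩ | ⟨hpos, -⟩ <;> linarith
  · intro htn β hβ
    rw [starMatrix_quadForm_of_dotProduct_one_eq_zero t hβ]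
    have hcs := mul_le_mul_of_nonneg_left (sq_center_le_of_dotProduct_one_eq_zero hβ) ht
    -- times `n`, the form is at most `(t (n - 1) - 2 n) β₀² ≤ 0` by `hcs`
    nlinarith [sq_nonneg (β 0)]

end StarGraph

open StarGraph

/-- The star `K_{1,n}` (`n ≥ 2`, center indexed by `0`, leaves by `1,…,n`) has supremal
`p`-negative type `log₂(2n/(n-1))`: it has `q`-negative type for all `0 ≤ q ≤ log₂(2n/(n-1))`,
fails to have `q`-negative type for `q > log₂(2n/(n-1))`, and at `p = log₂(2n/(n-1))` the
weight vector assigning `1` to the center and `-1/n` to each leaf sums to zero and makes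
the quadratic form vanish. -/
theorem star_supremal_neg_type {n : ℕ} (hn : 2 ≤ n)
    (D : ℝ → Matrix (Fin (n + 1)) (Fin (n + 1)) ℝ)
    (hD : ∀ q i j, D q i j =
      if i = j then 0 else if (i : ℕ) = 0 ∨ (j : ℕ) = 0 then 1 else (2 : ℝ) ^ q)
    (p : ℝ) (hp : p = Real.logb 2 (2 * (n : ℝ) / ((n : ℝ) - 1)))
    (α : Fin (n + 1) → ℝ)
    (hα : ∀ i, α i = if (i : ℕ) = 0 then 1 else -(1 / (n : ℝ))) :
    (∀ q : ℝ, 0 ≤ q → q ≤ p →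
      ∀ β : Fin (n + 1) → ℝ, β ⬝ᵥ 1 = 0 → (D q).mulVec β ⬝ᵥ β ≤ 0) ∧
    (∀ q : ℝ, p < q →
      ¬ (∀ β : Fin (n + 1) → ℝ, β ⬝ᵥ 1 = 0 → (D q).mulVec β ⬝ᵥ β ≤ 0)) ∧
    α ⬝ᵥ 1 = 0 ∧ (D p).mulVec α ⬝ᵥ α = 0 := by
  have hn0 : n ≠ 0 := by omega
  have hn1 : (1 : ℝ) < n := by exact_mod_cast hn
  have hDq (q : ℝ) : D q = starMatrix n (2 ^ q) := Matrix.ext fun i j => hD q i j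
  have hαw : α = centerWeight n := by
    funext i
    cases i using Fin.cases <;> simp [hα, centerWeight]
  have h2p : (2 : ℝ) ^ p = 2 * n / (n - 1) := by
    rw [hp, Real.rpow_logb (by norm_num) (by norm_num) (by positivity)]
  have hneg_type (q : ℝ) : IsCondNegSemidef (D q) ↔ q ≤ p := by
    rw [hDq, starMatrix_isCondNegSemidef_iff hn0 (by positivity), ← le_div_iff₀ (by linarith),
      ← h2p, Real.rpow_le_rpow_left_iff (by norm_num)]
  subst hαw
  refine ⟨fun q _ hqp => (hneg_type q).2 hqp, fun q hpq h => hpq.not_ge ((hneg_type q).1 h),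
    centerWeight_dotProduct_one hn0, ?_⟩
  rw [hDq, starMatrix_quadForm_centerWeight hn0, h2p, div_mul_cancel₀ _ (by linarith), sub_self,
    zero_div]
end

section
/- Let H_2 be the 4-vertex graph with edges v1v2, v1v3, v1v4, v2v3, endowed with the path metric. Then at p = log₂(2+√3), the p-distance matrix D_p of H_2 is invertible and satisfies ⟨D_p^{-1}1, 1⟩ = 0; consequently there exists a nonzero vector α with ⟨α,1⟩ = 0 and ⟨D_p α, α⟩ = 0. -/
/-!
With `t = 2 ^ p`, the distance matrix of `H₂` solves `D w = (4t - 1) • 1` for the explicit vector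
`w = (4t - 1 - 2t², t, t, 2t - 1)`, and `det D = 1 - 4t`. Hence `⟨D⁻¹ 1, 1⟩ = -2 (t² - 4t + 1) / (4t - 1)`,
which vanishes at the root `t = 2 + √3` of `t² - 4t + 1`. The isotropic vector is then `α = D⁻¹ 1`:
`⟨D α, α⟩ = ⟨1, α⟩ = 0`.
-/

open Matrix

namespace Matrix

variable {K ι : Type*} [Field K] [Fintype ι] [DecidableEq ι]

theorem inv_mulVec_eq_inv_smul_of_mulVec_eq_smul {A : Matrix ι ι K} (hA : IsUnit A)
    {v w : ι → K} {c : K} (hc : c ≠ 0) (hw : A *ᵥ w = c • v) : A⁻¹ *ᵥ v = c⁻¹ • w := by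
  have hv : v = A *ᵥ (c⁻¹ • w) := by rw [mulVec_smul, hw, smul_smul, inv_mul_cancel₀ hc, one_smul]
  rw [hv, mulVec_mulVec, nonsing_inv_mul A ((isUnit_iff_isUnit_det A).mp hA), one_mulVec]

theorem exists_isotropic_of_inv_mulVec_one_dotProduct_one_eq_zero [Nonempty ι]
    {A : Matrix ι ι K} (hA : IsUnit A) (h : A⁻¹ *ᵥ 1 ⬝ᵥ 1 = 0) :
    ∃ α : ι → K, α ≠ 0 ∧ α ⬝ᵥ 1 = 0 ∧ A *ᵥ α ⬝ᵥ α = 0 := by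
  have hα : A *ᵥ (A⁻¹ *ᵥ 1) = 1 := by
    rw [mulVec_mulVec, mul_nonsing_inv A ((isUnit_iff_isUnit_det A).mp hA), one_mulVec]
  refine ⟨A⁻¹ *ᵥ 1, fun h0 => ?_, h, by rw [hα, dotProduct_comm, h]⟩
  rw [h0, mulVec_zero] at hα
  exact zero_ne_one (congrFun hα (Classical.arbitrary ι))

end Matrix

/-- The distance matrix of `H₂` with the entries `2` (the distances `d(v₂,v₄) = d(v₃,v₄)`)
replaced by a parameter `t`, so that `t = 2 ^ p` gives the `p`-distance matrix. -/
def h2DistMatrix (t : ℝ) : Matrix (Fin 4) (Fin 4) ℝ :=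
  !![0, 1, 1, 1;
     1, 0, 1, t;
     1, 1, 0, t;
     1, t, t, 0]

def h2Weight (t : ℝ) : Fin 4 → ℝ :=
  ![4 * t - 1 - 2 * t ^ 2, t, t, 2 * t - 1]

theorem det_h2DistMatrix (t : ℝ) : (h2DistMatrix t).det = 1 - 4 * t := by
  simp [h2DistMatrix, det_succ_row_zero, Fin.sum_univ_succ, Fin.succAbove, Fin.castSucc,
    Fin.castAdd, Fin.castLE]
  ring

theorem h2DistMatrix_mulVec_h2Weight (t : ℝ) :
    h2DistMatrix t *ᵥ h2Weight t = (4 * t - 1) • (1 : Fin 4 → ℝ) := by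
  ext i
  fin_cases i <;>
    simp [h2DistMatrix, h2Weight, mulVec, dotProduct, Fin.sum_univ_four] <;> ring

theorem h2Weight_dotProduct_one (t : ℝ) :
    h2Weight t ⬝ᵥ 1 = -2 * (t ^ 2 - 4 * t + 1) := by
  simp [h2Weight, dotProduct, Fin.sum_univ_four]
  ring

theorem isUnit_h2DistMatrix {t : ℝ} (ht : 4 * t - 1 ≠ 0) : IsUnit (h2DistMatrix t) := by
  rw [isUnit_iff_isUnit_det, det_h2DistMatrix, isUnit_iff_ne_zero]
  contrapose! ht
  linarith

theorem inv_h2DistMatrix_mulVec_one_dotProduct_one {t : ℝ} (ht : 4 * t - 1 ≠ 0) :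
    (h2DistMatrix t)⁻¹ *ᵥ 1 ⬝ᵥ 1 = -2 * (t ^ 2 - 4 * t + 1) / (4 * t - 1) := by
  rw [inv_mulVec_eq_inv_smul_of_mulVec_eq_smul (isUnit_h2DistMatrix ht) ht (h2DistMatrix_mulVec_h2Weight t),
    smul_dotProduct, h2Weight_dotProduct_one, smul_eq_mul, div_eq_inv_mul]

/-- For the graph `H₂` (edges `v₁v₂, v₁v₃, v₁v₄, v₂v₃` with the path metric), at
`p = log₂(2+√3)` the `p`-distance matrix is invertible with `⟨D_p⁻¹ 1, 1⟩ = 0`; consequently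
there is a nonzero vector `α` with `⟨α, 1⟩ = 0` and `⟨D_p α, α⟩ = 0`. -/
theorem H2_supremal
    (D : ℝ → Matrix (Fin 4) (Fin 4) ℝ)
    (hD : ∀ p, D p =
      !![0, 1, 1, 1;
         1, 0, 1, (2 : ℝ) ^ p;
         1, 1, 0, (2 : ℝ) ^ p;
         1, (2 : ℝ) ^ p, (2 : ℝ) ^ p, 0])
    (p : ℝ) (hp : p = Real.logb 2 (2 + Real.sqrt 3)) :
    IsUnit (D p) ∧ (D p)⁻¹.mulVec 1 ⬝ᵥ 1 = 0 ∧
      ∃ α : Fin 4 → ℝ, α ≠ 0 ∧ α ⬝ᵥ 1 = 0 ∧ (D p).mulVec α ⬝ᵥ α = 0 := by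
  have hDp : D p = h2DistMatrix (2 + Real.sqrt 3) := by
    rw [hD, hp, Real.rpow_logb (by norm_num) (by norm_num) (by positivity), h2DistMatrix]
  have hdet : 4 * (2 + Real.sqrt 3) - 1 ≠ 0 := by nlinarith [Real.sqrt_nonneg 3]
  have hroot : (2 + Real.sqrt 3) ^ 2 - 4 * (2 + Real.sqrt 3) + 1 = 0 := by
    linear_combination Real.sq_sqrt (show (0 : ℝ) ≤ 3 by norm_num)
  have hunit : IsUnit (D p) := hDp ▸ isUnit_h2DistMatrix hdet
  have hzero : (D p)⁻¹ *ᵥ 1 ⬝ᵥ 1 = 0 := by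
    rw [hDp, inv_h2DistMatrix_mulVec_one_dotProduct_one hdet, hroot, mul_zero, zero_div]
  exact ⟨hunit, hzero, exists_isotropic_of_inv_mulVec_one_dotProduct_one_eq_zero hunit hzero⟩
end

section
/- Let H_3 be the 4-vertex graph with edges v1v2, v1v3, v1v4, v2v3, v3v4 with path metric (so only d(v2,v4) = 2, all other nonzero distances equal 1). Then H_3 does not have strict p-negative type at p = log₂ 3: there exists a nonzero α with Σα_i = 0 and Σ_{i,j} d(v_i,v_j)^p α_i α_j = 0, while H_3 has p-negative type for all p ≤ log₂ 3. -/
open Matrix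

/-- For the graph `H₃` (edges `v₁v₂, v₁v₃, v₁v₄, v₂v₃, v₃v₄` with path metric, so only
`d(v₂,v₄) = 2`), the space has `q`-negative type for all `0 ≤ q ≤ log₂ 3`, but at
`p = log₂ 3` there is a nonzero vector `α` with `⟨α, 1⟩ = 0` and `⟨D_p α, α⟩ = 0`,
so strict `p`-negative type fails there. -/
theorem H3_supremal
    (D : ℝ → Matrix (Fin 4) (Fin 4) ℝ)
    (hD : ∀ q, D q =
      !![0, 1, 1, 1;
         1, 0, 1, (2 : ℝ) ^ q;
         1, 1, 0, 1;
         1, (2 : ℝ) ^ q, 1, 0])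
    (p : ℝ) (hp : p = Real.logb 2 3) :
    (∃ α : Fin 4 → ℝ, α ≠ 0 ∧ α ⬝ᵥ 1 = 0 ∧ (D p).mulVec α ⬝ᵥ α = 0) ∧
      ∀ q : ℝ, 0 ≤ q → q ≤ p →
        ∀ β : Fin 4 → ℝ, β ⬝ᵥ 1 = 0 → (D q).mulVec β ⬝ᵥ β ≤ 0 := by
  have h3 : (2:ℝ) ^ p = 3 := by
    rw [hp, Real.rpow_logb] <;> norm_num
  constructor
  · refine ⟨![1,-1,1,-1], ?_, ?_, ?_⟩
    · intro h
      have := congrFun h 0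
      simp at this
    · simp [dotProduct, Fin.sum_univ_four]
    · simp [hD, mulVec, dotProduct, Fin.sum_univ_four, h3, Matrix.vecHead, Matrix.vecTail]
      ring
  · intro q hq hqp β hβ
    have hs0 : (0:ℝ) < 2 ^ q := Real.rpow_pos_of_pos (by norm_num) q
    have hs3 : (2:ℝ) ^ q ≤ 3 := by
      rw [← h3]
      exact Real.rpow_le_rpow_of_exponent_le (by norm_num) hqp
    have hsum : β 0 + β 1 + β 2 + β 3 = 0 := by
      simpa [dotProduct, Fin.sum_univ_four] using hβ
    rw [hD]
    simp only [mulVec, dotProduct, Fin.sum_univ_four]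
    simp [Matrix.cons_val', Matrix.cons_val_zero, Matrix.cons_val_one, Matrix.vecHead, Matrix.vecTail]
    have key : (2:ℝ)^q * (β 1 * β 3) ≤ β 0^2 + β 0 * β 2 + β 2^2 := by
      have hbd : β 1 + β 3 = -(β 0 + β 2) := by linarith
      have hsq : (β 1 + β 3)^2 = (β 0 + β 2)^2 := by rw [hbd]; ring
      rcases le_or_gt 0 (β 1 * β 3) with h | h
      · nlinarith [sq_nonneg (β 0 - β 2), sq_nonneg (β 1 - β 3),
          mul_nonneg (sub_nonneg.2 hs3) h, hsq]
      · nlinarith [sq_nonneg (β 0 - β 2),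
          mul_nonpos_of_nonneg_of_nonpos hs0.le h.le]
    have e1 : β 0 * (β 0 + β 1 + β 2 + β 3) = 0 := by rw [hsum]; ring
    have e2 : β 2 * (β 0 + β 1 + β 2 + β 3) = 0 := by rw [hsum]; ring
    nlinarith [key, e1, e2]
end
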